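/- arXiv:2307.12770 — 5 statements merged into one kernel-verified Lean document; each statement's English description precedes it below -/
import Mathlib

section
/- Let π_{vw} = v=u₁, u₂, …, u_{n'}=w be the unique path from v to w in T, and suppose the occupant of w in configuration A is a hole. Then the plan α_{vw} = (u_{n'-1}→w, u_{n'-2}→u_{n'-1}, …, v→u₂) is applicable from A, has length d(v,w), and in the resulting configuration ρ(A,α_{vw}) the occupant of u_j in A occupies u_{j+1} for each j < n', the hole that was on w occupies v (in particular v is unoccupied by pebbles after the plan), and all occupants of vertices outside π_{vw} are unchanged. -/
namespace PMT

variable {V P H : Type}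

/-- A configuration assigns to each pebble or hole a vertex, bijectively. -/
abbrev Config (P H V : Type) : Type := (P ⊕ H) ≃ V

/- Apply a single move `u → v`: applicable iff `(u,v)` is an edge and the occupant of `v`
is a hole; applying it swaps the occupants of `u` and `v`. -/
open Classical in
noncomputable def applyMove (G : SimpleGraph V) (A : Config P H V) (m : V × V) :
    Option (Config P H V) :=
  if G.Adj m.1 m.2 ∧ (A.symm m.2).isRight = true then
    some (A.trans (Equiv.swap m.1 m.2))
  else
    none

/-- Apply a plan (finite list of moves) in order; defined (`some`) only when each
successive move is applicable. -/
noncomputable def applyPlan (G : SimpleGraph V) :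
    Config P H V → List (V × V) → Option (Config P H V)
  | A, [] => some A
  | A, m :: f => (applyMove G A m).bind fun B => applyPlan G B f

/-- The plan `α_{vw}` (bring hole from `w` to `v`) along a path `p` from `v` to `w`:
the moves `(u_{n'-1} → w, u_{n'-2} → u_{n'-1}, …, v → u₂)`. -/
def bringHolePlan (G : SimpleGraph V) {v w : V} (p : G.Walk v w) : List (V × V) :=
  ((List.range p.length).map fun i => (p.getVert i, p.getVert (i + 1))).reverse

lemma applyPlan_append (G : SimpleGraph V) (A : Config P H V) (f g : List (V × V)) :
    applyPlan G A (f ++ g) = (applyPlan G A f).bind fun B => applyPlan G B g := by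
  induction f generalizing A with
  | nil => simp [applyPlan]
  | cons m f ih =>
    simp only [List.cons_append, applyPlan]
    cases applyMove G A m <;> simp [ih]

-- `Equiv.swap` must use the classical `DecidableEq V` instance that `applyMove` uses.
open Classical in
lemma applyMove_of_adj {G : SimpleGraph V} {A : Config P H V} {a b : V} (h : G.Adj a b)
    (hb : (A.symm b).isRight = true) :
    applyMove G A (a, b) = some (A.trans (Equiv.swap a b)) := by
  rw [applyMove, if_pos ⟨h, hb⟩]

lemma bringHolePlan_length (G : SimpleGraph V) {v w : V} (p : G.Walk v w) :
    (bringHolePlan G p).length = p.length := by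
  simp [bringHolePlan]

lemma bringHolePlan_cons (G : SimpleGraph V) {a b w : V} (h : G.Adj a b) (q : G.Walk b w) :
    bringHolePlan G (.cons h q) = bringHolePlan G q ++ [(a, b)] := by
  simp [bringHolePlan, List.range_succ_eq_map, SimpleGraph.Walk.getVert_cons_succ]

open SimpleGraph

def ShiftsAlong (A B : Config P H V) {G : SimpleGraph V} {v w : V} (p : G.Walk v w) : Prop :=
  (∀ i < p.length, B (A.symm (p.getVert i)) = p.getVert (i + 1)) ∧
    B (A.symm w) = v ∧ ∀ x ∉ p.support, B.symm x = A.symm x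

lemma shiftsAlong_nil (A : Config P H V) {G : SimpleGraph V} (v : V) :
    ShiftsAlong A A (Walk.nil : G.Walk v v) :=
  ⟨by simp, by simp, fun _ _ => rfl⟩

open Classical in
lemma ShiftsAlong.cons {A B : Config P H V} {G : SimpleGraph V} {a b w : V} {h : G.Adj a b}
    {q : G.Walk b w} (hp : (Walk.cons h q).IsPath) (hB : ShiftsAlong A B q) :
    ShiftsAlong A (B.trans (Equiv.swap a b)) (.cons h q) := by
  obtain ⟨hq, ha⟩ := Walk.cons_isPath_iff h q |>.mp hp
  obtain ⟨hshift, hend, hout⟩ := hB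
  refine ⟨fun i hi => ?_, by simp [hend], fun x hx => ?_⟩
  · cases i with
    | zero =>
      have hBa : B (A.symm a) = a := by rw [← hout a ha, Equiv.apply_symm_apply]
      simp [hBa]
    | succ j =>
      have hj : j < q.length := by simpa using hi
      have hne_a : q.getVert (j + 1) ≠ a := fun hc => ha (hc ▸ q.getVert_mem_support _)
      have hne_b : q.getVert (j + 1) ≠ b := by
        rw [Ne, hq.getVert_eq_start_iff hj]
        omega
      simp only [Walk.getVert_cons_succ, Equiv.trans_apply, hshift j hj]
      exact Equiv.swap_apply_of_ne_of_ne hne_a hne_b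
  · rw [Walk.support_cons, List.mem_cons, not_or] at hx
    have hxb : x ≠ b := fun hc => hx.2 (hc ▸ q.start_mem_support)
    rw [Equiv.symm_trans_apply, Equiv.symm_swap, Equiv.swap_apply_of_ne_of_ne hx.1 hxb]
    exact hout x hx.2

open Classical in
/-- The plan along `cons h q` is the plan along `q` followed by the move `a → b`, which is
applicable because the plan along `q` has brought the hole of `w` to `b`. -/
theorem applyPlan_bringHolePlan {G : SimpleGraph V} (A : Config P H V) {v w : V}
    (p : G.Walk v w) (hp : p.IsPath) (hw : (A.symm w).isRight = true) :
    ∃ B, applyPlan G A (bringHolePlan G p) = some B ∧ ShiftsAlong A B p := by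
  induction p with
  | nil => exact ⟨A, rfl, shiftsAlong_nil A _⟩
  | @cons a b w h q ih =>
    obtain ⟨B, hplan, hB⟩ := ih hp.of_cons hw
    have hhole : (B.symm b).isRight = true := by rwa [← hB.2.1, Equiv.symm_apply_apply]
    refine ⟨B.trans (Equiv.swap a b), ?_, hB.cons hp⟩
    simp [bringHolePlan_cons, applyPlan_append, hplan, applyPlan, applyMove_of_adj h hhole]

end PMT

theorem bring_hole_general {V P H : Type}
    (G : SimpleGraph V)
    (A : PMT.Config P H V) (v w : V) (p : G.Walk v w) (hp : p.IsPath)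
    (hw : (A.symm w).isRight = true) :
    ∃ B : PMT.Config P H V,
      PMT.applyPlan G A (PMT.bringHolePlan G p) = some B ∧
      (PMT.bringHolePlan G p).length = p.length ∧
      (∀ i : ℕ, i < p.length → B (A.symm (p.getVert i)) = p.getVert (i + 1)) ∧
      B (A.symm w) = v ∧
      (B.symm v).isRight = true ∧
      (∀ x : V, x ∉ p.support → B.symm x = A.symm x) := by
  obtain ⟨B, hplan, hshift, hend, hout⟩ := PMT.applyPlan_bringHolePlan A p hp hw
  have hv : B.symm v = A.symm w := by rw [← hend, Equiv.symm_apply_apply]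
  exact ⟨B, hplan, PMT.bringHolePlan_length G p, hshift, hend, hv ▸ hw, hout⟩

/-- if the occupant of `w` is a hole and `p` is the (unique) path from `v` to
`w`, then `α_{vw}` is applicable, has length `d(v,w)`, each occupant of `u_j` moves to
`u_{j+1}`, the hole on `w` moves to `v` (so `v` is unoccupied by pebbles afterwards), and
occupants outside the path are unchanged. -/
theorem bring_hole {V P H : Type} [Fintype V] [Fintype P] [Fintype H]
    (G : SimpleGraph V) (hT : G.IsTree)
    (hcard : Fintype.card V = Fintype.card P + Fintype.card H)
    (A : PMT.Config P H V) (v w : V) (p : G.Walk v w) (hp : p.IsPath)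
    (hw : (A.symm w).isRight = true) :
    ∃ B : PMT.Config P H V,
      PMT.applyPlan G A (PMT.bringHolePlan G p) = some B ∧
      (PMT.bringHolePlan G p).length = p.length ∧
      (∀ i : ℕ, i < p.length → B (A.symm (p.getVert i)) = p.getVert (i + 1)) ∧
      B (A.symm w) = v ∧
      (B.symm v).isRight = true ∧
      (∀ x : V, x ∉ p.support → B.symm x = A.symm x) :=
  bring_hole_general G A v w p hp hw
end

section
/- For every tree T with n vertices, every set P of pebbles with |P| < n, every valid initial configuration A, and every set of destination vertices D ⊆ V with |D| = |P|, there exists a plan f with |f| ≤ n² such that ρ(A,f)(P) = D, i.e., after applying f the set of vertices occupied by pebbles is exactly D (unlabeled pebble motion on trees is solvable in at most n² moves). -/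
namespace PMTAux

open Finset

variable {W : Type} [DecidableEq W]

def chainMoves : List W → List (W × W)
  | [] => []
  | [_] => []
  | a :: b :: t => (a, b) :: chainMoves (b :: t)

lemma chainMoves_length : ∀ l : List W, (chainMoves l).length = l.length - 1
  | [] => rfl
  | [_] => rfl
  | a :: b :: t => by
    have := chainMoves_length (b :: t)
    simp only [chainMoves, List.length_cons] at *
    omega

open Classical in
noncomputable def moveQ (G : SimpleGraph W) (Q : Finset W) (m : W × W) :
    Option (Finset W) :=
  if G.Adj m.1 m.2 ∧ m.2 ∉ Q then some (Q.image (Equiv.swap m.1 m.2)) else none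

noncomputable def planQ (G : SimpleGraph W) : Finset W → List (W × W) → Option (Finset W)
  | Q, [] => some Q
  | Q, m :: f => (moveQ G Q m).bind fun Q' => planQ G Q' f

lemma planQ_append (G : SimpleGraph W) (f g : List (W × W)) :
    ∀ Q, planQ G Q (f ++ g) = (planQ G Q f).bind fun Q' => planQ G Q' g := by
  induction f with
  | nil => intro Q; simp [planQ]
  | cons m f ih =>
    intro Q
    simp only [List.cons_append, planQ]
    cases moveQ G Q m with
    | none => simp
    | some Q' => simp [ih]

lemma image_swap_eq (Q : Finset W) {a b : W} (ha : a ∈ Q) (hb : b ∉ Q) :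
    Q.image (Equiv.swap a b) = insert b (Q.erase a) := by
  ext x
  simp only [mem_image, mem_insert, mem_erase]
  constructor
  · rintro ⟨y, hy, rfl⟩
    rcases eq_or_ne y a with rfl | hya
    · left; exact Equiv.swap_apply_left _ _
    · have hyb : y ≠ b := fun h => hb (h ▸ hy)
      right
      rw [Equiv.swap_apply_of_ne_of_ne hya hyb]
      exact ⟨hya, hy⟩
  · rintro (rfl | ⟨hxa, hx⟩)
    · exact ⟨a, ha, Equiv.swap_apply_left _ _⟩
    · have hxb : x ≠ b := fun h => hb (h ▸ hx)
      exact ⟨x, hx, Equiv.swap_apply_of_ne_of_ne hxa hxb⟩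

lemma shiftF (G : SimpleGraph W) :
    ∀ (l : List W) (Q : Finset W) (a z : W),
      List.Chain' G.Adj (a :: (l ++ [z])) → (a :: (l ++ [z])).Nodup → a ∈ Q →
      (∀ x ∈ l ++ [z], x ∉ Q) →
      planQ G Q (chainMoves (a :: (l ++ [z]))) = some (insert z (Q.erase a)) := by
  intro l
  induction l with
  | nil =>
    intro Q a z hc hnd ha hl
    have hadj : G.Adj a z := (List.isChain_pair.mp (by simpa [List.Chain'] using hc))
    have hz : z ∉ Q := hl z (by simp)
    show planQ G Q ((a, z) :: chainMoves [z]) = _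
    simp only [planQ, moveQ, if_pos (And.intro hadj hz), chainMoves, Option.bind_some]
    rw [image_swap_eq Q ha hz]
  | cons c t ih =>
    intro Q a z hc hnd ha hl
    simp only [List.cons_append] at hc hnd hl ⊢
    unfold List.Chain' at hc
    rw [List.isChain_cons_cons] at hc
    obtain ⟨hadj, hc'⟩ := hc
    rw [List.nodup_cons] at hnd
    obtain ⟨hanotin, hnd'⟩ := hnd
    have hcQ : c ∉ Q := hl c (by simp)
    have hcmem : c ∉ t ++ [z] := (List.nodup_cons.mp hnd').1
    show planQ G Q ((a, c) :: chainMoves (c :: (t ++ [z]))) = _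
    simp only [planQ, moveQ, if_pos (And.intro hadj hcQ), Option.bind_some]
    rw [image_swap_eq Q ha hcQ]
    rw [ih (insert c (Q.erase a)) c z hc' hnd' (mem_insert_self _ _) ?side]
    · congr 1
      rw [Finset.erase_insert (fun h => hcQ (Finset.mem_of_mem_erase h))]
    case side =>
      intro x hx
      have hxQ : x ∉ Q := hl x (by simp [hx])
      have hxc : x ≠ c := fun h => hcmem (h ▸ hx)
      intro hmem
      rcases Finset.mem_insert.mp hmem with h | h
      · exact hxc h
      · exact hxQ (Finset.mem_of_mem_erase h)

lemma shiftH (G : SimpleGraph W) :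
    ∀ (l : List W) (Q : Finset W) (a b : W),
      List.Chain' G.Adj (a :: (l ++ [b])) → (a :: (l ++ [b])).Nodup → a ∈ Q →
      (∀ x ∈ l, x ∈ Q) → b ∉ Q →
      planQ G Q ((chainMoves (a :: (l ++ [b]))).reverse)
        = some (insert b (Q.erase a)) := by
  intro l
  induction l with
  | nil =>
    intro Q a b hc hnd ha _ hb
    have hadj : G.Adj a b := (List.isChain_pair.mp (by simpa [List.Chain'] using hc))
    show planQ G Q ((a, b) :: chainMoves [b]).reverse = _
    simp only [chainMoves, List.reverse_cons, List.reverse_nil, List.nil_append]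
    simp only [planQ, moveQ, if_pos (And.intro hadj hb), Option.bind_some]
    rw [image_swap_eq Q ha hb]
  | cons c t ih =>
    intro Q a b hc hnd ha hl hb
    simp only [List.cons_append] at hc hnd ⊢
    unfold List.Chain' at hc
    rw [List.isChain_cons_cons] at hc
    obtain ⟨hadj, hc'⟩ := hc
    rw [List.nodup_cons] at hnd
    obtain ⟨hanotin, hnd'⟩ := hnd
    have hcQ : c ∈ Q := hl c (by simp)
    have hac : a ≠ c := fun h => hanotin (by simp [h])
    have hcb : c ≠ b := by
      intro h; exact hb (h ▸ hcQ)
    have hab : a ≠ b := fun h => hb (h ▸ ha)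
    show planQ G Q (((a, c) :: chainMoves (c :: (t ++ [b]))).reverse) = _
    rw [List.reverse_cons, planQ_append]
    rw [ih Q c b hc' hnd' hcQ (fun x hx => hl x (by simp [hx])) hb]
    have hcmem : c ∉ insert b (Q.erase c) := by
      intro h
      rcases Finset.mem_insert.mp h with h | h
      · exact hcb h
      · exact (Finset.notMem_erase c Q) h
    have hamem : a ∈ insert b (Q.erase c) :=
      Finset.mem_insert_of_mem (Finset.mem_erase.mpr ⟨hac, ha⟩)
    simp only [Option.bind_some, planQ, moveQ, if_pos (And.intro hadj hcmem)]
    rw [image_swap_eq _ hamem hcmem]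
    congr 1
    ext x
    simp only [Finset.mem_insert, Finset.mem_erase]
    constructor
    · rintro (rfl | ⟨hxa, (rfl | ⟨hxc, hxQ⟩)⟩)
      · exact Or.inr ⟨hac.symm, hcQ⟩
      · exact Or.inl rfl
      · exact Or.inr ⟨hxa, hxQ⟩
    · rintro (rfl | ⟨hxa, hxQ⟩)
      · exact Or.inr ⟨hab.symm, Or.inl rfl⟩
      · rcases eq_or_ne x c with rfl | hxc
        · exact Or.inl rfl
        · exact Or.inr ⟨hxa, Or.inr ⟨hxc, hxQ⟩⟩

lemma val_swap {S : Set W} (u v x : ↥S) :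
    Equiv.swap (u : W) (v : W) (x : W) = ((Equiv.swap u v x : ↥S) : W) := by
  rcases eq_or_ne x u with rfl | hxu
  · simp
  · rcases eq_or_ne x v with rfl | hxv
    · simp
    · rw [Equiv.swap_apply_of_ne_of_ne hxu hxv,
        Equiv.swap_apply_of_ne_of_ne (fun h => hxu (Subtype.ext h))
          (fun h => hxv (Subtype.ext h))]

lemma planQ_lift (G : SimpleGraph W) (S : Set W) (R : Finset W)
    (hR : ∀ x ∈ R, x ∉ S) :
    ∀ (f : List (↥S × ↥S)) (Q' T' : Finset ↥S),
      planQ (G.induce S) Q' f = some T' →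
      planQ G (Q'.image Subtype.val ∪ R) (f.map (Prod.map Subtype.val Subtype.val))
        = some (T'.image Subtype.val ∪ R) := by
  intro f
  induction f with
  | nil =>
    intro Q' T' h
    simp only [planQ] at h
    rw [Option.some_inj] at h
    subst h
    simp [planQ]
  | cons m f ih =>
    intro Q' T' h
    simp only [planQ, moveQ] at h
    by_cases hcond : (G.induce S).Adj m.1 m.2 ∧ m.2 ∉ Q'
    · rw [if_pos hcond, Option.bind_some] at h
      have hadj : G.Adj (m.1 : W) (m.2 : W) := by
        have := hcond.1
        simpa [SimpleGraph.comap_adj] using this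
      have hmem : (m.2 : W) ∉ Q'.image Subtype.val ∪ R := by
        intro hx
        rcases Finset.mem_union.mp hx with hx | hx
        · obtain ⟨y, hy, hyv⟩ := Finset.mem_image.mp hx
          exact hcond.2 (by rwa [show y = m.2 from Subtype.ext hyv] at hy)
        · exact hR _ hx m.2.property
      have himg : (Q'.image Subtype.val ∪ R).image (Equiv.swap (m.1 : W) (m.2 : W))
          = (Q'.image (Equiv.swap m.1 m.2)).image Subtype.val ∪ R := by
        rw [Finset.image_union]
        congr 1
        · rw [Finset.image_image, Finset.image_image]
          exact Finset.image_congr (fun x _ => val_swap m.1 m.2 x)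
        · rw [show R.image (Equiv.swap (m.1 : W) (m.2 : W)) = R.image id from
            Finset.image_congr (fun x hx => Equiv.swap_apply_of_ne_of_ne
              (fun h => hR x hx (h ▸ m.1.property))
              (fun h => hR x hx (h ▸ m.2.property)))]
          simp
      simp only [List.map_cons, planQ, moveQ, Prod.map_fst, Prod.map_snd]
      rw [if_pos (And.intro hadj hmem), Option.bind_some, himg]
      exact ih _ _ h
    · rw [if_neg hcond] at h
      simp at h

lemma reachable_induce (G : SimpleGraph W) (S : Set W) :
    ∀ {a b : W} (w : G.Walk a b), (∀ x ∈ w.support, x ∈ S) →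
      ∀ (ha : a ∈ S) (hb : b ∈ S), (G.induce S).Reachable ⟨a, ha⟩ ⟨b, hb⟩ := by
  intro a b w
  induction w with
  | nil => intro _ ha hb; exact SimpleGraph.Reachable.refl _
  | @cons u c v h p ih =>
    intro hs ha hb
    have hcS : c ∈ S := hs c (by simp [SimpleGraph.Walk.support_cons])
    have h1 : (G.induce S).Adj ⟨u, ha⟩ ⟨c, hcS⟩ := by
      simpa [SimpleGraph.comap_adj] using h
    exact (h1.reachable).trans (ih (fun x hx => hs x (by simp [hx])) hcS hb)

lemma induce_ne_connected (G : SimpleGraph W) [Fintype W] (hc : G.Connected)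
    (h2 : 2 ≤ Fintype.card W) (r ℓ : W) (hmax : ∀ w, G.dist r w ≤ G.dist r ℓ) :
    (G.induce {w | w ≠ ℓ}).Connected := by
  have hℓr : ℓ ≠ r := by
    rintro rfl
    obtain ⟨b, hb⟩ := Fintype.exists_ne_of_one_lt_card h2 ℓ
    have h0 : G.dist ℓ b = 0 := by
      have := hmax b
      simpa [SimpleGraph.dist_self] using this
    rcases SimpleGraph.dist_eq_zero_iff_eq_or_not_reachable.mp h0 with h | h
    · exact hb h.symm
    · exact h (hc.preconnected ℓ b)
  have avoid : ∀ u : W, u ≠ ℓ → ∃ w : G.Walk u r, ℓ ∉ w.support := by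
    intro u hu
    obtain ⟨w, hw⟩ := (hc.preconnected u r).exists_walk_length_eq_dist
    refine ⟨w, fun hmem => ?_⟩
    have h1 : 1 ≤ (w.takeUntil ℓ hmem).length := by
      rcases Nat.eq_zero_or_pos (w.takeUntil ℓ hmem).length with h0 | h
      · exact absurd (SimpleGraph.Walk.eq_of_length_eq_zero h0) hu
      · exact h
    have hsplit : (w.takeUntil ℓ hmem).length + (w.dropUntil ℓ hmem).length
        = w.length := by
      conv_rhs => rw [← w.take_spec hmem]
      rw [SimpleGraph.Walk.length_append]
    have hd1 : G.dist ℓ r ≤ (w.dropUntil ℓ hmem).length := SimpleGraph.dist_le _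
    have h2' : G.dist r u ≤ G.dist r ℓ := hmax u
    have e4 : G.dist r u = G.dist u r := SimpleGraph.dist_comm
    have e5 : G.dist r ℓ = G.dist ℓ r := SimpleGraph.dist_comm
    omega
  have hrS : r ∈ {w | w ≠ ℓ} := fun h => hℓr (h.symm)
  rw [SimpleGraph.connected_iff]
  constructor
  · rintro ⟨u, hu⟩ ⟨v, hv⟩
    obtain ⟨wu, hwu⟩ := avoid u hu
    obtain ⟨wv, hwv⟩ := avoid v hv
    have h1 := reachable_induce G {w | w ≠ ℓ} wu
      (fun x hx => fun hxl => hwu (hxl ▸ hx)) hu hrS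
    have h2 := reachable_induce G {w | w ≠ ℓ} wv
      (fun x hx => fun hxl => hwv (hxl ▸ hx)) hv hrS
    exact h1.trans h2.symm
  · obtain ⟨b, hb⟩ := Fintype.exists_ne_of_one_lt_card h2 ℓ
    exact ⟨⟨b, hb⟩⟩

lemma reach_target (G : SimpleGraph W) [Fintype W] (hconn : G.Connected)
    (Q : Finset W) {ℓ q : W} (hlQ : ℓ ∉ Q) (hq : q ∈ Q) :
    ∃ (f : List (W × W)) (a : W), a ∈ Q ∧
      planQ G Q f = some (insert ℓ (Q.erase a)) ∧
      f.length ≤ Fintype.card W - 1 := by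
  obtain ⟨w0⟩ := hconn.preconnected ℓ q
  set s := w0.toPath.1.support with hs
  have snd : s.Nodup := w0.toPath.2.support_nodup
  have schain : List.Chain' G.Adj s := SimpleGraph.Walk.isChain_adj_support _
  have hqmem : q ∈ s := SimpleGraph.Walk.end_mem_support _
  set p : W → Bool := fun x => decide (x ∉ Q) with hp
  have hd_ne : s.dropWhile p ≠ [] := by
    intro h
    have := List.dropWhile_eq_nil_iff.mp h q hqmem
    simp only [hp, decide_eq_true_eq] at this
    exact this hq
  set a := (s.dropWhile p).head hd_ne with hadef
  have ha : a ∈ Q := by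
    have h := List.head_dropWhile_not p (l := s) hd_ne
    rw [← hadef] at h
    simp only [hp] at h
    simpa using h
  have hsplit : s.takeWhile p ++ (a :: (s.dropWhile p).tail) = s := by
    rw [hadef, List.cons_head_tail hd_ne, List.takeWhile_append_dropWhile]
  have hheadl : s = ℓ :: s.tail := SimpleGraph.Walk.support_eq_cons _
  have htw : s.takeWhile p = ℓ :: (s.tail.takeWhile p) := by
    conv_lhs => rw [hheadl]
    rw [List.takeWhile_cons_of_pos (by simp [hp, hlQ])]
  set h' := s.tail.takeWhile p with hh'
  have hlisteq : (s.takeWhile p ++ [a]).reverse = a :: (h'.reverse ++ [ℓ]) := by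
    rw [htw]; simp
  have hprefix : (s.takeWhile p ++ [a]) <+: s :=
    ⟨(s.dropWhile p).tail, by rw [List.append_assoc, List.singleton_append, hsplit]⟩
  have hnd2 : (a :: (h'.reverse ++ [ℓ])).Nodup := by
    rw [← hlisteq, List.nodup_reverse]
    exact snd.sublist hprefix.sublist
  have hchpre : List.Chain' G.Adj (s.takeWhile p ++ [a]) := by
    obtain ⟨tl, htl⟩ := hprefix
    have := schain
    rw [← htl] at this
    exact (List.isChain_append.mp this).1
  have hch2 : List.Chain' G.Adj (a :: (h'.reverse ++ [ℓ])) := by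
    rw [← hlisteq]
    unfold List.Chain'
    rw [List.isChain_reverse]
    exact (show List.IsChain G.Adj _ from hchpre).imp (fun x y hxy => hxy.symm)
  have hside : ∀ x ∈ h'.reverse ++ [ℓ], x ∉ Q := by
    intro x hx
    rcases List.mem_append.mp hx with hx | hx
    · have hx' : x ∈ h' := List.mem_reverse.mp hx
      have := List.mem_takeWhile_imp hx'
      simpa [hp] using this
    · rw [List.mem_singleton] at hx
      subst hx; exact hlQ
  refine ⟨chainMoves (a :: (h'.reverse ++ [ℓ])), a, ha,
    shiftF G h'.reverse Q a ℓ hch2 hnd2 ha hside, ?_⟩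
  rw [chainMoves_length]
  have h1 : (s.takeWhile p ++ [a]).length ≤ s.length := hprefix.sublist.length_le
  have h2 : s.length ≤ Fintype.card W := snd.length_le_card
  have h3 : (s.takeWhile p ++ [a]).length = h'.length + 2 := by
    rw [htw]; simp
  simp only [List.length_cons, List.length_append, List.length_singleton,
    List.length_reverse, List.length_nil]
  omega

lemma make_hole (G : SimpleGraph W) [Fintype W] (hconn : G.Connected)
    (Q : Finset W) {ℓ v0 : W} (hlQ : ℓ ∈ Q) (hv0 : v0 ∉ Q) :
    ∃ (f : List (W × W)) (b : W), b ∉ Q ∧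
      planQ G Q f = some (insert b (Q.erase ℓ)) ∧
      f.length ≤ Fintype.card W - 1 := by
  obtain ⟨w0⟩ := hconn.preconnected ℓ v0
  set s := w0.toPath.1.support with hs
  have snd : s.Nodup := w0.toPath.2.support_nodup
  have schain : List.Chain' G.Adj s := SimpleGraph.Walk.isChain_adj_support _
  have hvmem : v0 ∈ s := SimpleGraph.Walk.end_mem_support _
  set p : W → Bool := fun x => decide (x ∈ Q) with hp
  have hd_ne : s.dropWhile p ≠ [] := by
    intro h
    have := List.dropWhile_eq_nil_iff.mp h v0 hvmem
    simp only [hp, decide_eq_true_eq] at this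
    exact hv0 this
  set b := (s.dropWhile p).head hd_ne with hbdef
  have hb : b ∉ Q := by
    have h := List.head_dropWhile_not p (l := s) hd_ne
    rw [← hbdef] at h
    simp only [hp] at h
    simpa using h
  have hsplit : s.takeWhile p ++ (b :: (s.dropWhile p).tail) = s := by
    rw [hbdef, List.cons_head_tail hd_ne, List.takeWhile_append_dropWhile]
  have hheadl : s = ℓ :: s.tail := SimpleGraph.Walk.support_eq_cons _
  have htw : s.takeWhile p = ℓ :: (s.tail.takeWhile p) := by
    conv_lhs => rw [hheadl]
    rw [List.takeWhile_cons_of_pos (by simp [hp, hlQ])]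
  set t' := s.tail.takeWhile p with ht'
  have hlisteq : s.takeWhile p ++ [b] = ℓ :: (t' ++ [b]) := by
    rw [htw]; simp
  have hprefix : (s.takeWhile p ++ [b]) <+: s :=
    ⟨(s.dropWhile p).tail, by rw [List.append_assoc, List.singleton_append, hsplit]⟩
  have hnd2 : (ℓ :: (t' ++ [b])).Nodup := by
    rw [← hlisteq]
    exact snd.sublist hprefix.sublist
  have hch2 : List.Chain' G.Adj (ℓ :: (t' ++ [b])) := by
    rw [← hlisteq]
    obtain ⟨tl, htl⟩ := hprefix
    have := schain
    rw [← htl] at this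
    exact (List.isChain_append.mp this).1
  have hside : ∀ x ∈ t', x ∈ Q := by
    intro x hx
    have := List.mem_takeWhile_imp hx
    simpa [hp] using this
  refine ⟨(chainMoves (ℓ :: (t' ++ [b]))).reverse, b, hb,
    shiftH G t' Q ℓ b hch2 hnd2 hlQ hside hb, ?_⟩
  rw [List.length_reverse, chainMoves_length]
  have h1 : (s.takeWhile p ++ [b]).length ≤ s.length := hprefix.sublist.length_le
  have h2 : s.length ≤ Fintype.card W := snd.length_le_card
  have h3 : (s.takeWhile p ++ [b]).length = t'.length + 2 := by
    rw [htw]; simp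
  simp only [List.length_cons, List.length_append, List.length_singleton,
    List.length_reverse, List.length_nil]
  omega

lemma core : ∀ (n : ℕ) (W : Type) [Fintype W] [DecidableEq W] (G : SimpleGraph W),
    G.Connected → Fintype.card W ≤ n →
    ∀ Q D : Finset W, Q.card = D.card → Q.card < Fintype.card W →
    ∃ f : List (W × W), planQ G Q f = some D ∧
      f.length ≤ Fintype.card W * Fintype.card W := by
  intro n
  induction n with
  | zero =>
    intro W _ _ G _ hn Q D _ hQ
    exact absurd (lt_of_lt_of_le hQ hn) (Nat.not_lt_zero _)
  | succ n ih =>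
    intro W instF instD G hconn hn Q D hQD hQlt
    by_cases hQe : Q = ∅
    · refine ⟨[], ?_, by simp⟩
      have hD : D = ∅ := Finset.card_eq_zero.mp (by rw [← hQD, hQe, Finset.card_empty])
      rw [hQe, hD]
      rfl
    have hQne : Q.Nonempty := Finset.nonempty_iff_ne_empty.mpr hQe
    have hQpos : 0 < Q.card := Finset.card_pos.mpr hQne
    have hcard2 : 2 ≤ Fintype.card W := by omega
    obtain ⟨q0, hq0⟩ := hQne
    obtain ⟨ℓ, -, hmax⟩ := Finset.exists_max_image Finset.univ (G.dist q0)
      ⟨q0, Finset.mem_univ q0⟩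
    have hmax' : ∀ w, G.dist q0 w ≤ G.dist q0 ℓ := fun w => hmax w (Finset.mem_univ w)
    set S : Set W := {w | w ≠ ℓ} with hSdef
    have hconn' : (G.induce S).Connected :=
      induce_ne_connected G hconn hcard2 q0 ℓ hmax'
    letI : DecidablePred (· ∈ S) :=
      Classical.decPred _
    letI : Fintype ↥S := Fintype.ofFinite _
    have hcS : Fintype.card ↥S = Fintype.card W - 1 := by
      have h1 : Fintype.card ↥S
          = Fintype.card {w : W // ¬ (w = ℓ)} :=
        Fintype.card_congr (Equiv.subtypeEquivRight (fun _ => Iff.rfl))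
      rw [h1, Fintype.card_subtype_compl, Fintype.card_subtype_eq]
    by_cases hlD : ℓ ∈ D
    · -- bring a pebble to ℓ, then recurse on the rest
      have step1 : ∃ (f₁ : List (W × W)) (Q₁ : Finset W),
          planQ G Q f₁ = some Q₁ ∧ f₁.length ≤ Fintype.card W - 1 ∧
          ℓ ∈ Q₁ ∧ Q₁.card = Q.card := by
        by_cases hlQ : ℓ ∈ Q
        · exact ⟨[], Q, rfl, by simp, hlQ, rfl⟩
        · obtain ⟨f₁, a, haQ, hplan, hlen⟩ := reach_target G hconn Q hlQ hq0
          refine ⟨f₁, _, hplan, hlen, Finset.mem_insert_self _ _, ?_⟩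
          rw [Finset.card_insert_of_notMem (fun h => hlQ (Finset.mem_of_mem_erase h)),
            Finset.card_erase_of_mem haQ]
          omega
      obtain ⟨f₁, Q₁, hf₁, hlen₁, hℓQ₁, hcardQ₁⟩ := step1
      set Q₂ : Finset ↥S := (Q₁.erase ℓ).subtype (· ∈ S) with hQ₂def
      set D₂ : Finset ↥S := (D.erase ℓ).subtype (· ∈ S) with hD₂def
      have hQ₂img : Q₂.image Subtype.val = Q₁.erase ℓ := by
        have h1 := Finset.subtype_map_of_mem (p := (· ∈ S)) (s := Q₁.erase ℓ)
          (fun x hx => (show x ≠ ℓ from (Finset.mem_erase.mp hx).1))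
        rw [Finset.map_eq_image] at h1
        simpa using h1
      have hD₂img : D₂.image Subtype.val = D.erase ℓ := by
        have h1 := Finset.subtype_map_of_mem (p := (· ∈ S)) (s := D.erase ℓ)
          (fun x hx => (show x ≠ ℓ from (Finset.mem_erase.mp hx).1))
        rw [Finset.map_eq_image] at h1
        simpa using h1
      have hQ₂card : Q₂.card = Q.card - 1 := by
        have h2 : Q₂.card = (Q₁.erase ℓ).card := by
          rw [← hQ₂img]
          exact (Finset.card_image_of_injective _ Subtype.val_injective).symm
        rw [h2, Finset.card_erase_of_mem hℓQ₁, hcardQ₁]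
      have hD₂card : D₂.card = D.card - 1 := by
        have h2 : D₂.card = (D.erase ℓ).card := by
          rw [← hD₂img]
          exact (Finset.card_image_of_injective _ Subtype.val_injective).symm
        rw [h2, Finset.card_erase_of_mem hlD]
      obtain ⟨f₂, hf₂, hlen₂⟩ := ih ↥S (G.induce S) hconn' (by omega) Q₂ D₂
        (by rw [hQ₂card, hD₂card, hQD]) (by rw [hQ₂card, hcS]; omega)
      have hRS : ∀ x ∈ ({ℓ} : Finset W), x ∉ S := by
        intro x hx
        rw [Finset.mem_singleton] at hx
        subst hx
        exact fun h => h rfl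
      have hlift := planQ_lift G S {ℓ} hRS f₂ Q₂ D₂ hf₂
      have hQ₁eq : Q₂.image Subtype.val ∪ {ℓ} = Q₁ := by
        rw [hQ₂img, Finset.union_comm, ← Finset.insert_eq, Finset.insert_erase hℓQ₁]
      have hDeq : D₂.image Subtype.val ∪ {ℓ} = D := by
        rw [hD₂img, Finset.union_comm, ← Finset.insert_eq, Finset.insert_erase hlD]
      rw [hQ₁eq, hDeq] at hlift
      refine ⟨f₁ ++ f₂.map (Prod.map Subtype.val Subtype.val), ?_, ?_⟩
      · rw [planQ_append, hf₁, Option.bind_some]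
        exact hlift
      · rw [List.length_append, List.length_map]
        have h1 : f₂.length ≤ (Fintype.card W - 1) * (Fintype.card W - 1) := by
          rw [hcS] at hlen₂
          exact hlen₂
        obtain ⟨k, hk⟩ : ∃ k, Fintype.card W = k + 2 := ⟨Fintype.card W - 2, by omega⟩
        rw [hk] at hlen₁ h1 ⊢
        have e1 : k + 2 - 1 = k + 1 := by omega
        rw [e1] at hlen₁ h1
        nlinarith [hlen₁, h1]
    · -- make ℓ a hole, then recurse on the rest
      have step1 : ∃ (f₁ : List (W × W)) (Q₁ : Finset W),
          planQ G Q f₁ = some Q₁ ∧ f₁.length ≤ Fintype.card W - 1 ∧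
          ℓ ∉ Q₁ ∧ Q₁.card = Q.card := by
        by_cases hlQ : ℓ ∈ Q
        · have hhole : ∃ v0, v0 ∉ Q := by
            by_contra h
            push_neg at h
            have := Finset.eq_univ_iff_forall.mpr h
            rw [this, Finset.card_univ] at hQlt
            omega
          obtain ⟨v0, hv0⟩ := hhole
          obtain ⟨f₁, b, hbQ, hplan, hlen⟩ := make_hole G hconn Q hlQ hv0
          refine ⟨f₁, _, hplan, hlen, ?_, ?_⟩
          · intro h
            rcases Finset.mem_insert.mp h with h | h
            · exact hbQ (h ▸ hlQ)
            · exact (Finset.notMem_erase ℓ Q) h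
          · rw [Finset.card_insert_of_notMem (fun h => hbQ (Finset.mem_of_mem_erase h)),
              Finset.card_erase_of_mem hlQ]
            omega
        · exact ⟨[], Q, rfl, by simp, hlQ, rfl⟩
      obtain ⟨f₁, Q₁, hf₁, hlen₁, hℓQ₁, hcardQ₁⟩ := step1
      by_cases hfull : Q.card + 1 = Fintype.card W
      · have hQ₁sub : Q₁ ⊆ Finset.univ.erase ℓ := fun x hx =>
          Finset.mem_erase.mpr ⟨fun h => hℓQ₁ (h ▸ hx), Finset.mem_univ x⟩
        have hDsub : D ⊆ Finset.univ.erase ℓ := fun x hx =>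
          Finset.mem_erase.mpr ⟨fun h => hlD (h ▸ hx), Finset.mem_univ x⟩
        have hcardE : (Finset.univ.erase ℓ).card = Fintype.card W - 1 := by
          rw [Finset.card_erase_of_mem (Finset.mem_univ ℓ), Finset.card_univ]
        have hQ₁eq : Q₁ = Finset.univ.erase ℓ :=
          Finset.eq_of_subset_of_card_le hQ₁sub (by omega)
        have hDeq' : D = Finset.univ.erase ℓ :=
          Finset.eq_of_subset_of_card_le hDsub (by omega)
        refine ⟨f₁, by rw [hf₁, hQ₁eq, hDeq'], ?_⟩
        have h1 : Fintype.card W ≤ Fintype.card W * Fintype.card W :=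
          Nat.le_mul_of_pos_left _ (by omega)
        omega
      · set Q₂ : Finset ↥S := Q₁.subtype (· ∈ S) with hQ₂def
        set D₂ : Finset ↥S := D.subtype (· ∈ S) with hD₂def
        have hQ₂img : Q₂.image Subtype.val = Q₁ := by
          have h1 := Finset.subtype_map_of_mem (p := (· ∈ S)) (s := Q₁)
            (fun x hx => (show x ≠ ℓ from fun h => hℓQ₁ (h ▸ hx)))
          rw [Finset.map_eq_image] at h1
          simpa using h1
        have hD₂img : D₂.image Subtype.val = D := by
          have h1 := Finset.subtype_map_of_mem (p := (· ∈ S)) (s := D)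
            (fun x hx => (show x ≠ ℓ from fun h => hlD (h ▸ hx)))
          rw [Finset.map_eq_image] at h1
          simpa using h1
        have hQ₂card : Q₂.card = Q.card := by
          have h2 : Q₂.card = Q₁.card := by
            rw [← hQ₂img]
            exact (Finset.card_image_of_injective _ Subtype.val_injective).symm
          rw [h2, hcardQ₁]
        have hD₂card : D₂.card = D.card := by
          rw [← hD₂img]
          exact (Finset.card_image_of_injective _ Subtype.val_injective).symm
        obtain ⟨f₂, hf₂, hlen₂⟩ := ih ↥S (G.induce S) hconn' (by omega) Q₂ D₂
          (by rw [hQ₂card, hD₂card, hQD]) (by rw [hQ₂card, hcS]; omega)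
        have hRS : ∀ x ∈ (∅ : Finset W), x ∉ S := by simp
        have hlift := planQ_lift G S ∅ hRS f₂ Q₂ D₂ hf₂
        rw [Finset.union_empty, Finset.union_empty, hQ₂img, hD₂img] at hlift
        refine ⟨f₁ ++ f₂.map (Prod.map Subtype.val Subtype.val), ?_, ?_⟩
        · rw [planQ_append, hf₁, Option.bind_some]
          exact hlift
        · rw [List.length_append, List.length_map]
          have h1 : f₂.length ≤ (Fintype.card W - 1) * (Fintype.card W - 1) := by
            rw [hcS] at hlen₂
            exact hlen₂
          obtain ⟨k, hk⟩ : ∃ k, Fintype.card W = k + 2 := ⟨Fintype.card W - 2, by omega⟩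
          rw [hk] at hlen₁ h1 ⊢
          have e1 : k + 2 - 1 = k + 1 := by omega
          rw [e1] at hlen₁ h1
          nlinarith [hlen₁, h1]

lemma bridge {V P H : Type} [DecidableEq V] [Fintype P] (G : SimpleGraph V) :
    ∀ (f : List (V × V)) (A : PMT.Config P H V) (Q' : Finset V),
      planQ G (Finset.univ.image fun p : P => A (Sum.inl p)) f = some Q' →
      ∃ B, PMT.applyPlan G A f = some B ∧
        Finset.univ.image (fun p : P => B (Sum.inl p)) = Q' := by
  intro f
  induction f with
  | nil =>
    intro A Q' h
    refine ⟨A, rfl, ?_⟩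
    simp only [planQ] at h
    exact Option.some_inj.mp h
  | cons m f ihf =>
    intro A Q' h
    simp only [planQ, moveQ] at h
    by_cases hcond : G.Adj m.1 m.2 ∧ m.2 ∉ (Finset.univ.image fun p : P => A (Sum.inl p))
    · rw [if_pos hcond, Option.bind_some] at h
      have hiso : (A.symm m.2).isRight = true := by
        rcases hy : A.symm m.2 with y | y
        · exfalso
          apply hcond.2
          refine Finset.mem_image.mpr ⟨y, Finset.mem_univ y, ?_⟩
          rw [← hy]
          simp
        · rfl
      have happ : PMT.applyMove G A m = some (A.trans (Equiv.swap m.1 m.2)) := by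
        rw [PMT.applyMove, if_pos (show G.Adj m.1 m.2 ∧ ((A.symm) m.2).isRight = true
          from ⟨hcond.1, hiso⟩)]
        congr
        funext a b
        exact Subsingleton.elim _ _

      have himg : (Finset.univ.image fun p : P => (A.trans (Equiv.swap m.1 m.2)) (Sum.inl p))
          = (Finset.univ.image fun p : P => A (Sum.inl p)).image (Equiv.swap m.1 m.2) := by
        rw [Finset.image_image]
        rfl
      obtain ⟨B, hB1, hB2⟩ := ihf (A.trans (Equiv.swap m.1 m.2)) Q' (by rw [himg]; exact h)
      refine ⟨B, ?_, hB2⟩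
      show (PMT.applyMove G A m).bind _ = some B
      rw [happ, Option.bind_some]
      exact hB1
    · rw [if_neg hcond] at h
      simp at h

end PMTAux

/-- unlabeled pebble motion on trees is solvable in at most `n²` moves. -/
theorem unlabeled_pmt {V P H : Type} [Fintype V] [Fintype P] [Fintype H]
    (G : SimpleGraph V) (hT : G.IsTree)
    (hcard : Fintype.card V = Fintype.card P + Fintype.card H)
    (hP : Fintype.card P < Fintype.card V)
    (A : PMT.Config P H V) (D : Finset V) (hD : D.card = Fintype.card P) :
    ∃ (f : List (V × V)) (B : PMT.Config P H V),
      PMT.applyPlan G A f = some B ∧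
      f.length ≤ (Fintype.card V) ^ 2 ∧
      ∀ v : V, v ∈ D ↔ ∃ q : P, B (Sum.inl q) = v := by
  letI : DecidableEq V := Classical.decEq V
  have hQcard : (Finset.univ.image fun p : P => A (Sum.inl p)).card = Fintype.card P := by
    rw [Finset.card_image_of_injective _
      (show Function.Injective (fun p : P => A (Sum.inl p)) from
        fun a b hab => Sum.inl_injective (A.injective hab)), Finset.card_univ]
  obtain ⟨f, hplan, hlen⟩ := PMTAux.core (Fintype.card V) V G hT.isConnected le_rfl
    (Finset.univ.image fun p : P => A (Sum.inl p)) D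
    (by rw [hQcard, hD]) (by rw [hQcard]; exact hP)
  obtain ⟨B, hB, hBQ⟩ := PMTAux.bridge G f A D hplan
  refine ⟨f, B, hB, by rw [pow_two]; exact hlen, fun v => ?_⟩
  rw [← hBQ]
  simp [Finset.mem_image]
end

section
/- Let T=(V,E) be a tree with diameter δ that is not a path graph, let c = c(T) ≥ 2, and let r ≠ t be two vertices of T. Then there exist subsets S₀, S₁, …, S_m of V (caterpillar sets) such that: each S_k induces a connected subtree of T; |S_k| = c+1 for every k < m and |S_m| ≤ c+1; r ∈ S₀ and t ∈ S_m; for every k < m, |S_k ∩ S_{k+1}| ≥ 2 and S_k ∩ S_{k+1} contains at least one junction of T; for every k < m, |S_k ∪ S_{k+1}| ≤ 2c; and m ≤ 2·δ/(c−1) + 1. -/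
namespace PMT

variable {V : Type}

/-- The degree of a vertex (number of neighbors). -/
noncomputable def deg (G : SimpleGraph V) (v : V) : ℕ := (G.neighborSet v).ncard

/-- A corridor: a (nontrivial) path whose endpoints have degree different from 2 and
whose internal vertices all have degree exactly 2. -/
def IsCorridor (G : SimpleGraph V) {a b : V} (p : G.Walk a b) : Prop :=
  p.IsPath ∧ 1 ≤ p.length ∧ deg G a ≠ 2 ∧ deg G b ≠ 2 ∧
    ∀ x ∈ p.support, x ≠ a → x ≠ b → deg G x = 2

/-- `c₁(T)`: the maximum length of a corridor. -/
noncomputable def c1 (G : SimpleGraph V) : ℕ :=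
  sSup {n | ∃ (a b : V) (p : G.Walk a b), IsCorridor G p ∧ p.length = n}

/-- `c₂(T)`: the maximum length of a corridor both of whose endpoints are junctions
(vertices of degree greater than 2); `0` if no such corridor exists. -/
noncomputable def c2 (G : SimpleGraph V) : ℕ :=
  sSup {n | ∃ (a b : V) (p : G.Walk a b),
    IsCorridor G p ∧ 2 < deg G a ∧ 2 < deg G b ∧ p.length = n}

/-- A path graph: all vertices lie on a single path. -/
def IsPathGraph (G : SimpleGraph V) : Prop :=
  ∃ (a b : V) (p : G.Walk a b), p.IsPath ∧ ∀ x : V, x ∈ p.support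

/- The constant `c(T)`: `c₁(T)` if `T` is a path graph,
`max (c₁(T)+1) (c₂(T)+2)` otherwise. -/
open Classical in
noncomputable def cT (G : SimpleGraph V) : ℕ :=
  if IsPathGraph G then c1 G else max (c1 G + 1) (c2 G + 2)

end PMT

/-!
Walk along a shortest path `r = v₀, …, v_d = t` in windows `{v_a, …, v_{a+c}}`. A window that
does not reach `t` contains a junction among `v_{a+2}, …, v_{a+c}`, since otherwise a corridor of
length at least `c > c₁` would appear. The next window starts just before the last such junction,
so consecutive windows share two vertices, one of them a junction. Consecutive junctions along the
path are joined by a corridor, hence lie at most `c₂ ≤ c - 2` apart; therefore every second window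
starts at least `c` further along the path, which gives the bound on `m`.
-/

open Finset SimpleGraph Walk

namespace SimpleGraph.Walk

variable {V : Type} {G : SimpleGraph V} {u v : V} {p : G.Walk u v}

lemma IsPath.exists_segment [DecidableEq V] (hp : p.IsPath) {i j : ℕ} (hij : i ≤ j)
    (hj : j ≤ p.length) :
    ∃ q : G.Walk (p.getVert i) (p.getVert j), q.IsPath ∧ q.length = j - i ∧
      ∀ z, z ∈ q.support ↔ z ∈ (Icc i j).image p.getVert := by
  have hend : (p.drop i).getVert (j - i) = p.getVert j := by
    rw [drop_getVert, Nat.add_sub_cancel' hij]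
  refine ⟨((p.drop i).take (j - i)).copy rfl hend, by simpa using (hp.drop i).take (j - i),
    by simp only [length_copy, take_length, drop_length]; omega, fun z => ?_⟩
  simp only [support_copy, mem_support_iff_exists_getVert, take_getVert, drop_getVert,
    take_length, drop_length, mem_image, mem_Icc]
  constructor
  · rintro ⟨n, rfl, hn⟩
    exact ⟨i + min (j - i) n, by omega, rfl⟩
  · rintro ⟨k, hk, rfl⟩
    exact ⟨k - i, by rw [min_eq_right (by omega), Nat.add_sub_cancel' hk.1], by omega⟩

def window [DecidableEq V] (p : G.Walk u v) (c a : ℕ) : Finset V :=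
  (Icc a (min (a + c) p.length)).image p.getVert

variable [DecidableEq V] {a b c i : ℕ}

lemma getVert_mem_window (hai : a ≤ i) (hi : i ≤ a + c) (hip : i ≤ p.length) :
    p.getVert i ∈ p.window c a :=
  mem_image_of_mem _ (mem_Icc.2 ⟨hai, le_min hi hip⟩)

lemma card_window_le : (p.window c a).card ≤ c + 1 :=
  card_image_le.trans (by rw [Nat.card_Icc]; omega)

lemma card_window_union_le (hab : a ≤ b) :
    (p.window c a ∪ p.window c b).card ≤ b + c + 1 - a := by
  have hsub : p.window c a ∪ p.window c b ⊆ (Icc a (b + c)).image p.getVert := by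
    rw [window, window, ← image_union]
    exact image_subset_image (union_subset (Icc_subset_Icc le_rfl (by omega))
      (Icc_subset_Icc hab (by omega)))
  exact (card_le_card hsub).trans (card_image_le.trans (by rw [Nat.card_Icc]))

lemma IsPath.connected_induce_window (hp : p.IsPath) (ha : a ≤ p.length) :
    (G.induce ↑(p.window c a)).Connected := by
  obtain ⟨q, -, -, hq⟩ := hp.exists_segment (j := min (a + c) p.length) (le_min (by omega) ha)
    (min_le_right _ _)
  have hset : (↑(p.window c a) : Set V) = {z | z ∈ q.support} := by
    ext z
    simp [window, hq]
  exact hset ▸ q.connected_induce_support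

lemma IsPath.card_window (hp : p.IsPath) (h : a + c ≤ p.length) :
    (p.window c a).card = c + 1 := by
  rw [window, min_eq_left h, card_image_of_injOn, Nat.card_Icc]
  · omega
  · exact hp.getVert_injOn.mono fun k hk =>
      show k ≤ p.length by simp only [coe_Icc, Set.mem_Icc] at hk; omega

lemma IsPath.two_le_card_window_inter (hp : p.IsPath) (hab : a ≤ b) (hba : b < a + c)
    (hb : b < p.length) : 2 ≤ (p.window c a ∩ p.window c b).card := by
  have hne : p.getVert b ≠ p.getVert (b + 1) := fun h => by
    have := hp.getVert_injOn (show b ≤ p.length by omega) (show b + 1 ≤ p.length by omega) h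
    omega
  rw [← card_pair hne]
  refine card_le_card (insert_subset ?_ (singleton_subset_iff.2 ?_)) <;>
    exact mem_inter.2 ⟨getVert_mem_window (by omega) (by omega) (by omega),
      getVert_mem_window (by omega) (by omega) (by omega)⟩

end SimpleGraph.Walk

lemma div_two_mul_le_of_add_le {a : ℕ → ℕ} {c m : ℕ}
    (h : ∀ k, k + 2 < m → a k + c ≤ a (k + 2)) : ∀ k < m, k / 2 * c ≤ a k
  | 0, _ => by simp
  | 1, _ => by simp
  | k + 2, hk => by
    have := div_two_mul_le_of_add_le h k (by omega)
    have := h k hk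
    rw [show (k + 2) / 2 = k / 2 + 1 by omega, add_one_mul]
    omega

lemma sub_one_mul_sub_one_le_of_add_le {a : ℕ → ℕ} {c d m : ℕ}
    (h : ∀ k, k + 2 < m → a k + c ≤ a (k + 2)) (hd : ∀ k < m, a k + c < d) :
    (m - 1) * (c - 1) ≤ 2 * d := by
  rcases Nat.eq_zero_or_pos m with rfl | hm
  · simp
  have hhalf := div_two_mul_le_of_add_le h (m - 1) (by omega)
  have := hd (m - 1) (by omega)
  calc (m - 1) * (c - 1) ≤ (2 * ((m - 1) / 2) + 2) * c :=
        Nat.mul_le_mul (by omega) (Nat.sub_le _ _)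
    _ = 2 * ((m - 1) / 2 * c + c) := by ring
    _ ≤ 2 * d := by omega

lemma natCast_le_two_mul_div_add_one {m c d D : ℕ} (hc : 2 ≤ c) (hdD : d ≤ D)
    (h : (m - 1) * (c - 1) ≤ 2 * d) : (m : ℝ) ≤ 2 * D / ((c : ℝ) - 1) + 1 := by
  have hc' : (0 : ℝ) < (c : ℝ) - 1 := by
    have : (2 : ℝ) ≤ c := by exact_mod_cast hc
    linarith
  rw [← sub_le_iff_le_add, le_div_iff₀ hc']
  rcases Nat.eq_zero_or_pos m with rfl | hm
  · have : (0 : ℝ) ≤ D := D.cast_nonneg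
    simp only [Nat.cast_zero]
    nlinarith
  · have h' : (((m - 1) * (c - 1) : ℕ) : ℝ) ≤ ((2 * D : ℕ) : ℝ) := by
      exact_mod_cast h.trans (by omega)
    push_cast [Nat.cast_sub hm, Nat.cast_sub (by omega : 1 ≤ c)] at h'
    exact h'

namespace PMT

/-- `J` marks the junctions among the vertices `0, …, d` of a path; the two gap bounds are what
`c₁ < c` and `c₂ + 2 ≤ c` give along a path of the tree. -/
structure JunctionSpacing (J : ℕ → Prop) (c d : ℕ) : Prop where
  gap_lt : ∀ i j, i < j → j ≤ d → (∀ k, i < k → k < j → ¬ J k) → j < i + c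
  gap_add_two_le : ∀ i j, i < j → j ≤ d → J i → J j → (∀ k, i < k → k < j → ¬ J k) →
    j + 2 ≤ i + c

/-- The window `[x, x + c]` is followed by the window starting just before its last junction,
so that consecutive windows share that junction and its predecessor. -/
noncomputable def nextStart (J : ℕ → Prop) (c x : ℕ) : ℕ :=
  open Classical in Nat.findGreatest J (x + c) - 1

namespace JunctionSpacing

variable {J : ℕ → Prop} {c d : ℕ}

lemma exists_mem_window (h : JunctionSpacing J c d) {x : ℕ} (hx : x + c < d) :
    ∃ i, x + 2 ≤ i ∧ i ≤ x + c ∧ J i := by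
  have hc := h.gap_lt x (x + 1) (by omega) (by omega) fun k hk hk' => by omega
  by_contra! hnone
  have := h.gap_lt (x + 1) (x + c + 1) (by omega) (by omega) fun k hk hk' =>
    hnone k (by omega) (by omega)
  omega

lemma nextStart_spec (h : JunctionSpacing J c d) {x : ℕ} (hx : x + c < d) :
    x < nextStart J c x ∧ nextStart J c x < x + c ∧ J (nextStart J c x + 1) ∧
      ∀ i ≤ x + c, J i → i ≤ nextStart J c x + 1 := by
  classical
  obtain ⟨i, hi₁, hi₂, hi⟩ := h.exists_mem_window hx
  have hle : i ≤ Nat.findGreatest J (x + c) := Nat.le_findGreatest hi₂ hi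
  have hge : Nat.findGreatest J (x + c) ≤ x + c := Nat.findGreatest_le _
  have hJ : J (Nat.findGreatest J (x + c)) := Nat.findGreatest_spec hi₂ hi
  simp only [nextStart]
  refine ⟨by omega, by omega, by rwa [Nat.sub_add_cancel (by omega)], fun k hk hJk => ?_⟩
  have := Nat.le_findGreatest hk hJk
  omega

/-- Two windows after `[x, x + c]` we start past it: the junction following the shared one
is beyond `x + c` (by maximality) yet within reach of the next window (by `gap_add_two_le`). -/
lemma add_le_nextStart_nextStart (h : JunctionSpacing J c d) {x : ℕ} (hx : x + c < d)
    (hy : nextStart J c x + c < d) : x + c ≤ nextStart J c (nextStart J c x) := by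
  classical
  set y := nextStart J c x
  obtain ⟨hxy, hyx, hJy, hmax⟩ := h.nextStart_spec hx
  obtain ⟨-, -, -, hmax'⟩ := h.nextStart_spec hy
  have hnext : ∃ n, y + 1 < n ∧ n ≤ d ∧ J n := by
    by_contra! hnone
    have := h.gap_lt (y + 1) d (by omega) le_rfl fun k hk hk' => hnone k hk hk'.le
    omega
  obtain ⟨hn₁, hn₂, hJn⟩ := Nat.find_spec hnext
  have hgap := h.gap_add_two_le (y + 1) (Nat.find hnext) hn₁ hn₂ hJy hJn
    fun k hk hk' hJk => Nat.find_min hnext hk' ⟨hk, by omega, hJk⟩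
  have hbeyond : x + c < Nat.find hnext := by
    by_contra! hle
    have := hmax _ hle hJn
    omega
  have := hmax' (Nat.find hnext) (by omega) hJn
  omega

lemma exists_starts (h : JunctionSpacing J c d) :
    ∃ (m : ℕ) (a : ℕ → ℕ), a 0 = 0 ∧ a m ≤ d ∧ d ≤ a m + c ∧
      (∀ k < m, a k + c < d ∧ a k < a (k + 1) ∧ a (k + 1) < a k + c ∧ J (a (k + 1) + 1)) ∧
      (m - 1) * (c - 1) ≤ 2 * d := by
  classical
  set a : ℕ → ℕ := fun k => (nextStart J c)^[k] 0
  have ha : ∀ k, a (k + 1) = nextStart J c (a k) := fun k => Function.iterate_succ_apply' _ _ _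
  have hstop : ∃ k, d ≤ a k + c := by
    by_contra! hrun
    have hgrow : ∀ k, k ≤ a k := fun k => by
      induction k with
      | zero => exact le_rfl
      | succ k ih => rw [ha]; have := (h.nextStart_spec (hrun k)).1; omega
    have := hgrow d
    have := hrun d
    omega
  set m := Nat.find hstop
  have hrun : ∀ k < m, a k + c < d := fun k hk => by
    have := Nat.find_min hstop hk
    omega
  have hstep : ∀ k < m, a k + c < d ∧ a k < a (k + 1) ∧ a (k + 1) < a k + c ∧
      J (a (k + 1) + 1) := fun k hk => by
    rw [ha]
    obtain ⟨h₁, h₂, h₃, -⟩ := h.nextStart_spec (hrun k hk)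
    exact ⟨hrun k hk, h₁, h₂, h₃⟩
  have hlast : a m ≤ d := by
    rcases Nat.eq_zero_or_pos m with hm | hm
    · simp [hm, a]
    · have := hstep (m - 1) (by omega)
      rw [Nat.sub_add_cancel hm] at this
      omega
  refine ⟨m, a, rfl, hlast, Nat.find_spec hstop, hstep,
    sub_one_mul_sub_one_le_of_add_le (fun k hk => ?_) hrun⟩
  rw [ha, ha]
  exact h.add_le_nextStart_nextStart (hrun k (by omega)) (by rw [← ha]; exact hrun _ (by omega))

end JunctionSpacing

variable {V : Type} {G : SimpleGraph V}

lemma two_le_deg_getVert [Finite V] {u v : V} {p : G.Walk u v} (hp : p.IsPath) {i : ℕ}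
    (hi₀ : 0 < i) (hi : i < p.length) : 2 ≤ deg G (p.getVert i) := by
  have hne : p.getVert (i - 1) ≠ p.getVert (i + 1) := fun h => by
    have := hp.getVert_injOn (show i - 1 ≤ p.length by omega) (show i + 1 ≤ p.length by omega) h
    omega
  have hpred : G.Adj (p.getVert (i - 1)) (p.getVert i) := by
    simpa [Nat.sub_add_cancel hi₀] using p.adj_getVert_succ (i := i - 1) (by omega)
  calc 2 = ({p.getVert (i - 1), p.getVert (i + 1)} : Set V).ncard := (Set.ncard_pair hne).symm
    _ ≤ deg G (p.getVert i) :=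
      Set.ncard_le_ncard (Set.pair_subset hpred.symm (p.adj_getVert_succ hi))

def IsSubcorridor {a b : V} (p : G.Walk a b) : Prop :=
  p.IsPath ∧ ∀ x ∈ p.support, x ≠ a → x ≠ b → deg G x = 2

lemma IsSubcorridor.reverse {a b : V} {p : G.Walk a b} (hp : IsSubcorridor p) :
    IsSubcorridor p.reverse :=
  ⟨hp.1.reverse, fun x hx hxb hxa => hp.2 x (by simpa using hx) hxa hxb⟩

lemma IsSubcorridor.exists_cons (hG : G.IsAcyclic) {a b : V} {p : G.Walk a b}
    (hp : IsSubcorridor p) (ha : deg G a = 2) :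
    ∃ (w : V) (q : G.Walk w b), IsSubcorridor q ∧ q.length = p.length + 1 := by
  obtain ⟨w, hw, hwne⟩ := Set.exists_ne_of_one_lt_ncard (ha ▸ one_lt_two) p.snd
  have hws : w ∉ p.support := fun hmem => hwne (hG.eq_snd_of_adj_start hp.1 hw hmem)
  refine ⟨w, cons (G.adj_symm hw) p, ⟨hp.1.cons hws, fun x hx hxw hxb => ?_⟩, rfl⟩
  rw [support_cons, List.mem_cons] at hx
  rcases hx with rfl | hx
  · exact (hxw rfl).elim
  by_cases hxa : x = a
  · exact hxa ▸ ha
  · exact hp.2 x hx hxa hxb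

lemma IsSubcorridor.exists_isCorridor [Fintype V] (hG : G.IsAcyclic) {a b : V} {p : G.Walk a b}
    (hp : IsSubcorridor p) (hlen : p.length ≠ 0) :
    ∃ (x y : V) (q : G.Walk x y), IsCorridor G q ∧ p.length ≤ q.length := by
  classical
  let P : ℕ → Prop := fun n => ∃ (x y : V) (q : G.Walk x y), IsSubcorridor q ∧ q.length = n
  have hmax : ∀ {x y : V} (q : G.Walk x y), IsSubcorridor q →
      q.length ≤ Nat.findGreatest P (Fintype.card V) := fun q hq =>
    Nat.le_findGreatest hq.1.length_lt.le ⟨_, _, q, hq, rfl⟩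
  obtain ⟨x, y, q, hq, hql⟩ := Nat.findGreatest_spec (P := P) (hp.1.length_lt.le) ⟨a, b, p, hp, rfl⟩
  have hpq := hmax p hp
  -- a longest subcorridor cannot be extended at either end, by `exists_cons`
  have hend : ∀ {x y : V} (q : G.Walk x y), IsSubcorridor q →
      q.length = Nat.findGreatest P (Fintype.card V) → deg G x ≠ 2 := by
    intro x y q hq hql hx
    obtain ⟨w, q', hq', hq'l⟩ := hq.exists_cons hG hx
    have := hmax q' hq'
    omega
  exact ⟨x, y, q, ⟨hq.1, by omega, hend q hq hql, hend q.reverse hq.reverse (by simpa using hql),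
    hq.2⟩, by omega⟩

lemma IsCorridor.length_le_c1 [Fintype V] {a b : V} {p : G.Walk a b} (hp : IsCorridor G p) :
    p.length ≤ c1 G :=
  le_csSup ⟨Fintype.card V, fun _ ⟨_, _, _, hq, hql⟩ => hql ▸ hq.1.length_lt.le⟩ ⟨a, b, p, hp, rfl⟩

lemma IsCorridor.length_le_c2 [Fintype V] {a b : V} {p : G.Walk a b} (hp : IsCorridor G p)
    (ha : 2 < deg G a) (hb : 2 < deg G b) : p.length ≤ c2 G :=
  le_csSup ⟨Fintype.card V, fun _ ⟨_, _, _, hq, _, _, hql⟩ => hql ▸ hq.1.length_lt.le⟩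
    ⟨a, b, p, hp, ha, hb, rfl⟩

lemma IsSubcorridor.length_le_c1 [Fintype V] (hG : G.IsAcyclic) {a b : V} {p : G.Walk a b}
    (hp : IsSubcorridor p) : p.length ≤ c1 G := by
  rcases Nat.eq_zero_or_pos p.length with h | h
  · simp [h]
  · obtain ⟨x, y, q, hq, hpq⟩ := hp.exists_isCorridor hG h.ne'
    exact hpq.trans hq.length_le_c1

lemma c1_lt_cT (h : ¬ IsPathGraph G) : c1 G < cT G := by
  rw [cT, if_neg h]
  omega

lemma c2_add_two_le_cT (h : ¬ IsPathGraph G) : c2 G + 2 ≤ cT G := by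
  rw [cT, if_neg h]
  omega

lemma exists_isSubcorridor_segment [Finite V] {u v : V} {p : G.Walk u v} (hp : p.IsPath)
    {i j : ℕ} (hij : i < j) (hj : j ≤ p.length)
    (hfree : ∀ k, i < k → k < j → ¬ 2 < deg G (p.getVert k)) :
    ∃ q : G.Walk (p.getVert i) (p.getVert j), IsSubcorridor q ∧ q.length = j - i := by
  classical
  obtain ⟨q, hq, hql, hqs⟩ := hp.exists_segment hij.le hj
  refine ⟨q, ⟨hq, fun z hz hzi hzj => ?_⟩, hql⟩
  obtain ⟨k, hk, rfl⟩ := mem_image.1 ((hqs z).1 hz)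
  rw [mem_Icc] at hk
  have hki : k ≠ i := by rintro rfl; exact hzi rfl
  have hkj : k ≠ j := by rintro rfl; exact hzj rfl
  have := two_le_deg_getVert hp (i := k) (by omega) (by omega)
  have := hfree k (by omega) (by omega)
  omega

lemma junctionSpacing_of_isPath [Fintype V] (hG : G.IsAcyclic) {u v : V} {p : G.Walk u v}
    (hp : p.IsPath) {c : ℕ} (h₁ : c1 G < c) (h₂ : c2 G + 2 ≤ c) :
    JunctionSpacing (fun i => 2 < deg G (p.getVert i)) c p.length where
  gap_lt i j hij hj hfree := by
    obtain ⟨q, hq, hql⟩ := exists_isSubcorridor_segment hp hij hj hfree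
    have := hq.length_le_c1 hG
    omega
  gap_add_two_le i j hij hj hJi hJj hfree := by
    obtain ⟨q, hq, hql⟩ := exists_isSubcorridor_segment hp hij hj hfree
    have := IsCorridor.length_le_c2 ⟨hq.1, by omega, by omega, by omega, hq.2⟩ hJi hJj
    omega

lemma exists_caterpillar_of_isPath [DecidableEq V] {r t : V} {p : G.Walk r t} (hp : p.IsPath)
    {c : ℕ} (hJ : JunctionSpacing (fun i => 2 < deg G (p.getVert i)) c p.length) :
    ∃ (m : ℕ) (S : ℕ → Finset V),
      (∀ k ≤ m, (G.induce (↑(S k) : Set V)).Connected) ∧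
      (∀ k < m, (S k).card = c + 1) ∧
      (S m).card ≤ c + 1 ∧
      r ∈ S 0 ∧ t ∈ S m ∧
      (∀ k < m, 2 ≤ (S k ∩ S (k + 1)).card) ∧
      (∀ k < m, ∃ j ∈ S k ∩ S (k + 1), 2 < deg G j) ∧
      (∀ k < m, (S k ∪ S (k + 1)).card ≤ 2 * c) ∧
      (m - 1) * (c - 1) ≤ 2 * p.length := by
  obtain ⟨m, a, ha₀, ham, hma, hstep, hm⟩ := hJ.exists_starts
  refine ⟨m, fun k => p.window c (a k), fun k hk => hp.connected_induce_window ?_,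
    fun k hk => hp.card_window ?_, card_window_le, ?_, ?_, fun k hk => ?_, fun k hk => ?_,
    fun k hk => ?_, hm⟩
  · rcases hk.lt_or_eq with hk | rfl
    · have := (hstep k hk).1
      omega
    · exact ham
  · exact (hstep k hk).1.le
  · simpa [ha₀] using getVert_mem_window (p := p) (c := c) le_rfl (Nat.zero_le _) (Nat.zero_le _)
  · simpa using getVert_mem_window (p := p) ham hma le_rfl
  · have := hstep k hk
    exact hp.two_le_card_window_inter (by omega) (by omega) (by omega)
  · have := hstep k hk
    exact ⟨_, mem_inter.2 ⟨getVert_mem_window (by omega) (by omega) (by omega),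
      getVert_mem_window (by omega) (by omega) (by omega)⟩, this.2.2.2⟩
  · have := hstep k hk
    exact (card_window_union_le this.2.1.le).trans (by omega)

end PMT

theorem caterpillar_sets_general {V : Type} [Fintype V] [DecidableEq V]
    (G : SimpleGraph V) (hT : G.IsTree) (hnp : ¬ PMT.IsPathGraph G)
    (r t : V) :
    ∃ (m : ℕ) (S : ℕ → Finset V),
      (∀ k ≤ m, (G.induce (↑(S k) : Set V)).Connected) ∧
      (∀ k < m, (S k).card = PMT.cT G + 1) ∧
      (S m).card ≤ PMT.cT G + 1 ∧
      r ∈ S 0 ∧ t ∈ S m ∧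
      (∀ k < m, 2 ≤ (S k ∩ S (k + 1)).card) ∧
      (∀ k < m, ∃ j ∈ S k ∩ S (k + 1), 2 < PMT.deg G j) ∧
      (∀ k < m, (S k ∪ S (k + 1)).card ≤ 2 * PMT.cT G) ∧
      (m : ℝ) ≤ 2 * (G.diam : ℝ) / ((PMT.cT G : ℝ) - 1) + 1 := by
  have : Nonempty V := ⟨r⟩
  obtain ⟨p, hp, hpd⟩ := hT.connected.exists_path_of_dist r t
  have hc₂ := PMT.c2_add_two_le_cT hnp
  have hJ := PMT.junctionSpacing_of_isPath hT.isAcyclic hp (PMT.c1_lt_cT hnp) hc₂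
  obtain ⟨m, S, hconn, hcard, hcard_m, hr, ht, hinter, hjunc, hunion, hm⟩ :=
    PMT.exists_caterpillar_of_isPath hp hJ
  have hdiam : p.length ≤ G.diam :=
    hpd ▸ G.dist_le_diam (G.connected_iff_ediam_ne_top.1 hT.connected)
  exact ⟨m, S, hconn, hcard, hcard_m, hr, ht, hinter, hjunc, hunion,
    natCast_le_two_mul_div_add_one (by omega) hdiam hm⟩

/-- existence of caterpillar sets. -/
theorem caterpillar_sets {V : Type} [Fintype V] [DecidableEq V]
    (G : SimpleGraph V) (hT : G.IsTree) (hnp : ¬ PMT.IsPathGraph G)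
    (hc : 2 ≤ PMT.cT G) (r t : V) (hrt : r ≠ t) :
    ∃ (m : ℕ) (S : ℕ → Finset V),
      (∀ k ≤ m, (G.induce (↑(S k) : Set V)).Connected) ∧
      (∀ k < m, (S k).card = PMT.cT G + 1) ∧
      (S m).card ≤ PMT.cT G + 1 ∧
      r ∈ S 0 ∧ t ∈ S m ∧
      (∀ k < m, 2 ≤ (S k ∩ S (k + 1)).card) ∧
      (∀ k < m, ∃ j ∈ S k ∩ S (k + 1), 2 < PMT.deg G j) ∧
      (∀ k < m, (S k ∪ S (k + 1)).card ≤ 2 * PMT.cT G) ∧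
      (m : ℝ) ≤ 2 * (G.diam : ℝ) / ((PMT.cT G : ℝ) - 1) + 1 :=
  caterpillar_sets_general G hT hnp r t
end

section
/- For every tree T with at least 3 vertices, there exists a leaf v of T such that c(Tᵛ) ≤ c(T), where Tᵛ is the tree obtained from T by removing v. -/
open SimpleGraph

variable {V : Type}

namespace Aux

lemma sSup_le' {S : Set ℕ} {m : ℕ} (h : ∀ k ∈ S, k ≤ m) : sSup S ≤ m := by
  rcases S.eq_empty_or_nonempty with rfl | hne
  · simp
  · exact csSup_le hne h

lemma le_sSup' {S : Set ℕ} {m k : ℕ} (hk : k ∈ S) (h : ∀ j ∈ S, j ≤ m) : k ≤ sSup S :=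
  le_csSup ⟨m, fun j hj => h j hj⟩ hk

lemma deg_eq_degree [Fintype V] (G : SimpleGraph V) [DecidableRel G.Adj] (x : V) :
    PMT.deg G x = G.degree x := by
  rw [PMT.deg, SimpleGraph.degree, SimpleGraph.neighborFinset,
    Set.ncard_eq_toFinset_card']

lemma path_support_length {a b : V} {G : SimpleGraph V} (p : G.Walk a b) :
    p.support.length = p.length + 1 := SimpleGraph.Walk.length_support p

lemma path_length_lt_card [Fintype V] {G : SimpleGraph V} {a b : V} {p : G.Walk a b}
    (hp : p.IsPath) : p.length < Fintype.card V := by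
  have h := hp.support_nodup.length_le_card
  rw [path_support_length] at h
  omega

/-- degree positivity in a connected graph with at least 2 vertices -/
lemma deg_pos [Fintype V] {G : SimpleGraph V} (hc : G.Connected)
    (h2 : 2 ≤ Fintype.card V) (x : V) : 1 ≤ PMT.deg G x := by
  obtain ⟨y, hy⟩ := Fintype.exists_ne_of_one_lt_card (by omega) x
  obtain ⟨w⟩ := hc.preconnected x y
  cases w with
  | nil => exact absurd rfl (Ne.symm hy)
  | cons h p =>
    have : _ ∈ G.neighborSet x := h
    have hfin : (G.neighborSet x).Finite := Set.toFinite _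
    have h' := Set.ncard_pos hfin |>.mpr ⟨_, this⟩
    show 1 ≤ (G.neighborSet x).ncard
    omega

end Aux

namespace Aux
open SimpleGraph
variable {V : Type}

lemma exists_leaf [Fintype V] {G : SimpleGraph V} (hT : G.IsTree)
    (h2 : 2 ≤ Fintype.card V) : ∃ v, PMT.deg G v = 1 := by
  classical
  have hsum : ∑ v, G.degree v = 2 * G.edgeFinset.card :=
    SimpleGraph.sum_degrees_eq_twice_card_edges G
  have hcard : G.edgeFinset.card + 1 = Fintype.card V := hT.card_edgeFinset
  by_contra h
  push_neg at h
  have h2' : ∀ v, 2 ≤ G.degree v := by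
    intro v
    have h1 := deg_pos hT.isConnected h2 v
    have hne := h v
    rw [deg_eq_degree] at h1 hne
    omega
  have hge : 2 * Fintype.card V ≤ ∑ v, G.degree v := by
    calc 2 * Fintype.card V = ∑ _v : V, 2 := by
          simp [Finset.sum_const, mul_comm]
      _ ≤ _ := Finset.sum_le_sum (fun v _ => h2' v)
  omega

lemma closure {G : SimpleGraph V} (hc : G.Preconnected) {S : Set V} {x0 : V}
    (hx0 : x0 ∈ S) (hcl : ∀ x ∈ S, ∀ y, G.Adj x y → y ∈ S) : ∀ y, y ∈ S := by
  intro y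
  obtain ⟨w⟩ := hc x0 y
  have key : ∀ (a b : V) (_w : G.Walk a b), a ∈ S → b ∈ S := by
    intro a b w
    induction w with
    | nil => exact id
    | cons h p ih => exact fun ha => ih (hcl _ ha _ h)
  exact key _ _ w hx0

lemma nbr_unique {G : SimpleGraph V} {v u : V} (hdeg : PMT.deg G v = 1)
    (hu : G.Adj v u) : G.neighborSet v = {u} := by
  obtain ⟨a, ha⟩ := Set.ncard_eq_one.mp hdeg
  have h : u ∈ G.neighborSet v := hu
  rw [ha] at h
  simp at h
  subst h; exact ha

lemma path_length_eq_dist {G : SimpleGraph V} (hT : G.IsTree) {a b : V}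
    {p : G.Walk a b} (hp : p.IsPath) : p.length = G.dist a b := by
  obtain ⟨q, hq, hql⟩ := (hT.isConnected.preconnected a b).exists_path_of_dist
  have heq : (⟨p, hp⟩ : G.Path a b) = ⟨q, hq⟩ := hT.IsAcyclic.path_unique _ _
  have : p = q := congrArg Subtype.val heq
  rw [this, hql]

end Aux

namespace Aux
open SimpleGraph Walk
variable {V : Type} {G : SimpleGraph V}

lemma getVert_injOn' {a b : V} {p : G.Walk a b} (hp : p.IsPath) :
    ∀ {i j : ℕ}, i ≤ p.length → j ≤ p.length → p.getVert i = p.getVert j → i = j := by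
  induction p with
  | nil => intro i j hi hj _; simp at hi hj; omega
  | cons hadj q ih =>
    rename_i u v w
    rw [Walk.cons_isPath_iff] at hp
    intro i j hi hj hij
    match i, j with
    | 0, 0 => rfl
    | 0, j+1 =>
      exfalso
      rw [Walk.getVert_zero, Walk.getVert_cons_succ] at hij
      exact hp.2 (Walk.mem_support_iff_exists_getVert.mpr ⟨j, hij.symm, by
        simp at hj; omega⟩)
    | i+1, 0 =>
      exfalso
      rw [Walk.getVert_zero, Walk.getVert_cons_succ] at hij
      exact hp.2 (Walk.mem_support_iff_exists_getVert.mpr ⟨i, hij, by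
        simp at hi; omega⟩)
    | i+1, j+1 =>
      rw [Walk.getVert_cons_succ, Walk.getVert_cons_succ] at hij
      simp only [Walk.length_cons] at hi hj
      have := ih hp.1 (by omega) (by omega) hij
      omega

lemma ends_ne {a b : V} {p : G.Walk a b} (hp : p.IsPath) (hl : 1 ≤ p.length) :
    a ≠ b := by
  intro h
  subst h
  have := getVert_injOn' hp (i := 0) (j := p.length) (by omega) le_rfl
    (by rw [Walk.getVert_zero, Walk.getVert_length])
  omega

lemma getVert_mem_support {a b : V} (p : G.Walk a b) (i : ℕ) :
    p.getVert i ∈ p.support := by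
  by_cases hi : i ≤ p.length
  · exact Walk.mem_support_iff_exists_getVert.mpr ⟨i, rfl, hi⟩
  · rw [Walk.getVert_of_length_le p (by omega)]
    exact Walk.end_mem_support p

/-- the second-to-last vertex -/
noncomputable def sndLast {a b : V} (p : G.Walk a b) : V := p.getVert (p.length - 1)

lemma adj_sndLast {a b : V} (p : G.Walk a b) (hl : 1 ≤ p.length) :
    G.Adj (sndLast p) b := by
  have h := Walk.adj_getVert_succ p (i := p.length - 1) (by omega)
  rw [show p.length - 1 + 1 = p.length by omega, Walk.getVert_length] at h
  exact h

lemma sndLast_mem_support {a b : V} (p : G.Walk a b) : sndLast p ∈ p.support :=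
  getVert_mem_support _ _

lemma sndLast_eq_start_iff {a b : V} {p : G.Walk a b} (hp : p.IsPath)
    (hl : 1 ≤ p.length) : sndLast p = a ↔ p.length = 1 := by
  constructor
  · intro h
    have := getVert_injOn' hp (i := p.length - 1) (j := 0) (by omega) (by omega)
      (by rw [Walk.getVert_zero]; exact h)
    omega
  · intro h
    simp [sndLast, h]

lemma sndLast_ne_end {a b : V} {p : G.Walk a b} (hp : p.IsPath) (hl : 1 ≤ p.length) :
    sndLast p ≠ b := by
  intro h
  have := getVert_injOn' hp (i := p.length - 1) (j := p.length) (by omega) le_rfl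
    (by rw [Walk.getVert_length]; exact h)
  omega

lemma adj_snd {a b : V} (p : G.Walk a b) (hl : 1 ≤ p.length) :
    G.Adj a (p.getVert 1) := by
  have h := Walk.adj_getVert_succ p (i := 0) (by omega)
  rwa [Walk.getVert_zero] at h

lemma isPath_concat {a b c : V} {p : G.Walk a b} (hp : p.IsPath) (h : G.Adj b c)
    (hc : c ∉ p.support) : (p.concat h).IsPath := by
  rw [Walk.isPath_def, Walk.support_concat]
  exact List.Nodup.append hp.support_nodup (List.nodup_singleton c)
    (by intro x hx hx'; simp at hx'; subst hx'; exact hc hx)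

lemma getVert_one_concat {a b c : V} (p : G.Walk a b) (h : G.Adj b c)
    (hl : 1 ≤ p.length) : (p.concat h).getVert 1 = p.getVert 1 := by
  rw [Walk.concat, Walk.getVert_append]
  rcases Nat.lt_or_ge 1 p.length with h' | h'
  · simp [h']
  · have hl1 : p.length = 1 := by omega
    rw [if_neg (by omega), hl1]
    simp only [Nat.sub_self, Walk.getVert_zero]
    have hb := p.getVert_length
    rw [hl1] at hb
    exact hb.symm

lemma sndLast_concat {a b c : V} (p : G.Walk a b) (h : G.Adj b c) :
    sndLast (p.concat h) = b := by
  rw [sndLast, Walk.concat, Walk.getVert_append]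
  simp [Walk.length_append]

end Aux

namespace Aux
open SimpleGraph Walk
variable {V : Type} {G : SimpleGraph V}

lemma end_not_mem_takeUntil [DecidableEq V] {v w y : V} {p : G.Walk v w} (hp : p.IsPath)
    (hy : y ∈ p.support) (hne : y ≠ w) : w ∉ (p.takeUntil y hy).support := by
  intro hw
  have hnodup := hp.support_nodup
  rw [← p.take_spec hy, Walk.support_append] at hnodup
  have hdisj := List.disjoint_of_nodup_append hnodup
  have hwd : w ∈ (p.dropUntil y hy).support := Walk.end_mem_support _
  rw [(p.dropUntil y hy).support_eq_cons] at hwd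
  rcases List.mem_cons.mp hwd with h | h
  · exact hne h.symm
  · exact hdisj hw h

lemma adj_mem_eq_sndLast [DecidableEq V] (hT : G.IsTree) {v0 u y : V} {p : G.Walk v0 u}
    (hp : p.IsPath) (hl : 1 ≤ p.length) (hy : y ∈ p.support) (hadj : G.Adj y u) :
    y = sndLast p := by
  have hyu : y ≠ u := hadj.ne
  have ht := hp.takeUntil hy
  have hnot := end_not_mem_takeUntil hp hy hyu
  have hq' : ((p.takeUntil y hy).concat hadj).IsPath := isPath_concat ht hadj hnot
  have hequ : p = (p.takeUntil y hy).concat hadj :=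
    congrArg Subtype.val (hT.IsAcyclic.path_unique ⟨p, hp⟩ ⟨_, hq'⟩)
  rw [hequ, sndLast_concat]

lemma append_isPath [DecidableEq V] (hT : G.IsTree) {v0 u b : V} {p : G.Walk v0 u}
    {q : G.Walk u b} (hp : p.IsPath) (hq : q.IsPath) (hlq : 1 ≤ q.length)
    (hz : q.getVert 1 ∉ p.support) : (p.append q).IsPath := by
  rw [Walk.isPath_def, Walk.support_append]
  refine List.Nodup.append hp.support_nodup ?_ ?_
  · have := hq.support_nodup
    rw [q.support_eq_cons] at this
    exact (List.nodup_cons.mp this).2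
  · intro y hyp hyt
    exfalso
    have hyq : y ∈ q.support := by
      rw [q.support_eq_cons]; exact List.mem_cons_of_mem _ hyt
    have hyu : y ≠ u := by
      intro h; subst h
      have hn := hq.support_nodup
      rw [q.support_eq_cons] at hn
      exact (List.nodup_cons.mp hn).1 hyt
    have htp : (q.takeUntil y hyq).IsPath := hq.takeUntil hyq
    have hlt : 1 ≤ (q.takeUntil y hyq).length := by
      rcases Nat.eq_zero_or_pos (q.takeUntil y hyq).length with h0 | h
      · exact absurd (Walk.eq_of_length_eq_zero h0).symm hyu
      · omega
    have hdp : (p.dropUntil y hyp).IsPath := hp.dropUntil hyp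
    have hwp : (p.dropUntil y hyp).reverse.IsPath := hdp.reverse
    have htw : q.takeUntil y hyq = (p.dropUntil y hyp).reverse :=
      congrArg Subtype.val (hT.IsAcyclic.path_unique ⟨_, htp⟩ ⟨_, hwp⟩)
    have hq1 : q.getVert 1 = if 1 < (q.takeUntil y hyq).length
        then (q.takeUntil y hyq).getVert 1
        else (q.dropUntil y hyq).getVert (1 - (q.takeUntil y hyq).length) := by
      conv_lhs => rw [← q.take_spec hyq]
      rw [Walk.getVert_append]
    rcases Nat.lt_or_ge 1 (q.takeUntil y hyq).length with hlt2 | hle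
    · rw [if_pos hlt2] at hq1
      apply hz
      rw [hq1]
      have hmem : (q.takeUntil y hyq).getVert 1 ∈ ((p.dropUntil y hyp).reverse).support := by
        rw [← htw]; exact getVert_mem_support _ 1
      rw [Walk.support_reverse, List.mem_reverse] at hmem
      exact p.support_dropUntil_subset hyp hmem
    · have hteq : (q.takeUntil y hyq).length = 1 := by omega
      rw [if_neg (by omega), hteq] at hq1
      simp only [Nat.sub_self, Walk.getVert_zero] at hq1
      exact hz (hq1 ▸ hyp)

lemma ext_aux [Fintype V] [DecidableEq V] (hT : G.IsTree) :
    ∀ (k : ℕ) {u e : V} (p : G.Walk u e), p.IsPath → 1 ≤ p.length →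
    (∀ x ∈ p.support, x ≠ u → x ≠ e → PMT.deg G x = 2) →
    Fintype.card V - p.length ≤ k →
    ∃ (e' : V) (p' : G.Walk u e'), p'.IsPath ∧ 1 ≤ p'.length ∧
      (∀ x ∈ p'.support, x ≠ u → x ≠ e' → PMT.deg G x = 2) ∧
      p'.getVert 1 = p.getVert 1 ∧ PMT.deg G e' ≠ 2 := by
  intro k
  induction k with
  | zero =>
    intro u e p hp hl _ hk
    exact absurd hk (by have := path_length_lt_card hp; omega)
  | succ k ih =>
    intro u e p hp hl hint hk
    by_cases hdeg : PMT.deg G e = 2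
    · obtain ⟨c, d, hcd, hset⟩ := Set.ncard_eq_two.mp hdeg
      have hpe : sndLast p ∈ G.neighborSet e := (adj_sndLast p hl).symm
      have hy : ∃ y ∈ G.neighborSet e, y ≠ sndLast p := by
        by_cases h : sndLast p = c
        · exact ⟨d, by rw [hset]; simp, by rw [h]; exact hcd.symm⟩
        · exact ⟨c, by rw [hset]; simp, fun hc => h hc.symm⟩
      obtain ⟨y, hyn, hyne⟩ := hy
      have hadj : G.Adj e y := hyn
      have hynot : y ∉ p.support := by
        intro hmem
        exact hyne (adj_mem_eq_sndLast hT hp hl hmem hadj.symm)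
      have hp' := isPath_concat hp hadj hynot
      have hint' : ∀ x ∈ (p.concat hadj).support, x ≠ u → x ≠ y → PMT.deg G x = 2 := by
        intro x hx hxu hxy
        rw [Walk.support_concat, List.mem_append] at hx
        rcases hx with hx | hx
        · by_cases hxe : x = e
          · subst hxe; exact hdeg
          · exact hint x hx hxu hxe
        · simp at hx; exact absurd hx hxy
      obtain ⟨e', p', P1, P2, P3, P4, P5⟩ := ih (p.concat hadj) hp'
        (by rw [Walk.length_concat]; omega) hint' (by rw [Walk.length_concat]; omega)
      exact ⟨e', p', P1, P2, P3, by rw [P4, getVert_one_concat p hadj hl], P5⟩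
    · exact ⟨e, p, hp, hl, hint, rfl, hdeg⟩

lemma exists_corridor_from_edge [Fintype V] [DecidableEq V] (hT : G.IsTree) {u y : V}
    (hadj : G.Adj u y) :
    ∃ (e' : V) (p' : G.Walk u e'), p'.IsPath ∧ 1 ≤ p'.length ∧
      (∀ x ∈ p'.support, x ≠ u → x ≠ e' → PMT.deg G x = 2) ∧
      p'.getVert 1 = y ∧ PMT.deg G e' ≠ 2 := by
  have hp : (Walk.cons hadj Walk.nil : G.Walk u y).IsPath := by
    rw [Walk.isPath_def]
    simp [hadj.ne]
  obtain ⟨e', p', P1, P2, P3, P4, P5⟩ := ext_aux hT (Fintype.card V)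
    (Walk.cons hadj Walk.nil) hp (by simp) (by
      intro x hx hxu hxy
      simp [Walk.support_cons, Walk.support_nil] at hx
      rcases hx with h | h
      · exact absurd h hxu
      · exact absurd h hxy) (by omega)
  refine ⟨e', p', P1, P2, P3, ?_, P5⟩
  rw [P4]
  simp [Walk.getVert_cons_succ]

end Aux

namespace Aux
open SimpleGraph Walk
variable {V : Type} {G : SimpleGraph V}

lemma deg_induce [Fintype V] (v x : V) (hx : x ≠ v) :
    PMT.deg (G.induce {x : V | x ≠ v}) ⟨x, hx⟩ = (G.neighborSet x \ {v}).ncard := by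
  rw [PMT.deg, ← Set.ncard_image_of_injective _ Subtype.val_injective]
  congr 1
  ext y
  simp only [Set.mem_image, SimpleGraph.mem_neighborSet, Set.mem_diff,
    Set.mem_singleton_iff]
  constructor
  · rintro ⟨⟨z, hz⟩, hadj, rfl⟩
    have : G.Adj x z := by simpa using hadj
    exact ⟨this, hz⟩
  · rintro ⟨hadj, hyv⟩
    refine ⟨⟨y, hyv⟩, ?_, rfl⟩
    simpa using hadj

lemma deg_induce_of_not_adj [Fintype V] {v x : V} (hx : x ≠ v) (hnadj : ¬ G.Adj x v) :
    PMT.deg (G.induce {x : V | x ≠ v}) ⟨x, hx⟩ = PMT.deg G x := by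
  rw [deg_induce v x hx, PMT.deg]
  congr 1
  rw [Set.diff_singleton_eq_self]
  simpa using fun h => hnadj h

lemma deg_induce_of_adj [Fintype V] {v x : V} (hx : x ≠ v) (hadj : G.Adj x v) :
    PMT.deg G x = PMT.deg (G.induce {x : V | x ≠ v}) ⟨x, hx⟩ + 1 := by
  rw [deg_induce v x hx, PMT.deg]
  have hv : v ∈ G.neighborSet x := hadj
  have := Set.ncard_diff_singleton_add_one hv (Set.toFinite _)
  omega

lemma adj_v_iff {v u : V} (hv : G.neighborSet v = {u}) (x : V) :
    G.Adj x v ↔ x = u := by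
  rw [SimpleGraph.adj_comm]
  change x ∈ G.neighborSet v ↔ _
  rw [hv, Set.mem_singleton_iff]

end Aux

namespace Aux
open SimpleGraph Walk
variable {V : Type} {G : SimpleGraph V}

lemma corridor_reverse {a b : V} {p : G.Walk a b} (h : PMT.IsCorridor G p) :
    PMT.IsCorridor G p.reverse := by
  obtain ⟨h1, h2, h3, h4, h5⟩ := h
  refine ⟨h1.reverse, by rwa [Walk.length_reverse], h4, h3, ?_⟩
  intro x hx hxb hxa
  rw [Walk.support_reverse, List.mem_reverse] at hx
  exact h5 x hx hxa hxb

lemma corridor_le_c1 {W : Type} [Fintype W] {H : SimpleGraph W} {a b : W}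
    {p : H.Walk a b} (h : PMT.IsCorridor H p) : p.length ≤ PMT.c1 H := by
  refine le_sSup' (m := Fintype.card W) ⟨a, b, p, h, rfl⟩ ?_
  rintro j ⟨a', b', p', hc', rfl⟩
  exact (path_length_lt_card hc'.1).le

lemma corridor_le_c2 {W : Type} [Fintype W] {H : SimpleGraph W} {a b : W}
    {p : H.Walk a b} (h : PMT.IsCorridor H p) (ha : 2 < PMT.deg H a)
    (hb : 2 < PMT.deg H b) : p.length ≤ PMT.c2 H := by
  refine le_sSup' (m := Fintype.card W) ⟨a, b, p, h, ha, hb, rfl⟩ ?_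
  rintro j ⟨a', b', p', hc', _, _, rfl⟩
  exact (path_length_lt_card hc'.1).le

lemma c1_le {W : Type} {H : SimpleGraph W} {m : ℕ}
    (hm : ∀ (a b : W) (p : H.Walk a b), PMT.IsCorridor H p → p.length ≤ m) :
    PMT.c1 H ≤ m := by
  refine sSup_le' ?_
  rintro j ⟨a, b, p, hc, rfl⟩
  exact hm a b p hc

lemma c2_le {W : Type} {H : SimpleGraph W} {m : ℕ}
    (hm : ∀ (a b : W) (p : H.Walk a b), PMT.IsCorridor H p →
      2 < PMT.deg H a → 2 < PMT.deg H b → p.length ≤ m) :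
    PMT.c2 H ≤ m := by
  refine sSup_le' ?_
  rintro j ⟨a, b, p, hc, ha, hb, rfl⟩
  exact hm a b p hc ha hb

lemma cT_le_max {W : Type} (H : SimpleGraph W) :
    PMT.cT H ≤ max (PMT.c1 H + 1) (PMT.c2 H + 2) := by
  rw [PMT.cT]
  split
  · exact le_trans (Nat.le_succ _) (le_max_left _ _)
  · exact le_rfl

lemma lift_isPath {v : V} {a b : ↥{x : V | x ≠ v}}
    {q : (G.induce {x : V | x ≠ v}).Walk a b} (hq : q.IsPath) :
    (q.map (SimpleGraph.Embedding.induce {x : V | x ≠ v}).toHom).IsPath :=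
  Walk.map_isPath_of_injective (fun x y h => Subtype.val_injective h) hq

lemma lift_support {v : V} {a b : ↥{x : V | x ≠ v}}
    (q : (G.induce {x : V | x ≠ v}).Walk a b) {x : V}
    (hx : x ∈ (q.map (SimpleGraph.Embedding.induce {x : V | x ≠ v}).toHom).support) :
    ∃ x' ∈ q.support, (x' : V) = x := by
  rw [Walk.support_map] at hx
  obtain ⟨x', hx', hxx⟩ := List.mem_map.mp hx
  exact ⟨x', hx', hxx⟩

lemma lift_support_ne {v : V} {a b : ↥{x : V | x ≠ v}}
    (q : (G.induce {x : V | x ≠ v}).Walk a b) {x : V}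
    (hx : x ∈ (q.map (SimpleGraph.Embedding.induce {x : V | x ≠ v}).toHom).support) :
    x ≠ v := by
  obtain ⟨x', _, rfl⟩ := lift_support q hx
  exact x'.2

end Aux

namespace Aux
open SimpleGraph Walk
variable {V : Type} {G : SimpleGraph V}

lemma cover_path_degs [Fintype V] [DecidableEq V] (hT : G.IsTree) (h3 : 3 ≤ Fintype.card V)
    {a b : V} {p : G.Walk a b} (hp : p.IsPath) (hcov : ∀ x, x ∈ p.support) :
    ∀ x, PMT.deg G x = (if x = a ∨ x = b then 1 else 2) := by
  classical
  have hsuplen : p.support.length = Fintype.card V := by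
    have hnd := hp.support_nodup
    have huniv : p.support.toFinset = Finset.univ :=
      Finset.eq_univ_iff_forall.mpr (fun x => List.mem_toFinset.mpr (hcov x))
    have := List.toFinset_card_of_nodup hnd
    rw [huniv] at this
    simp only [Finset.card_univ] at this
    omega
  have hlen : p.length + 1 = Fintype.card V := by
    rw [← path_support_length p]; exact hsuplen
  have hab : a ≠ b := ends_ne hp (by omega)
  have hint : ∀ x, x ≠ a → x ≠ b → 2 ≤ PMT.deg G x := by
    intro x hxa hxb
    obtain ⟨i, hgi, hile⟩ := Walk.mem_support_iff_exists_getVert.mp (hcov x)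
    have hi0 : i ≠ 0 := by
      intro h; rw [h, Walk.getVert_zero] at hgi; exact hxa hgi.symm
    have hil : i ≠ p.length := by
      intro h; rw [h, Walk.getVert_length] at hgi; exact hxb hgi.symm
    have hadj1 : G.Adj (p.getVert (i-1)) (p.getVert i) := by
      have h := Walk.adj_getVert_succ p (i := i - 1) (by omega)
      rwa [show i - 1 + 1 = i by omega] at h
    have hadj2 : G.Adj (p.getVert i) (p.getVert (i+1)) :=
      Walk.adj_getVert_succ p (by omega)
    have hne : p.getVert (i-1) ≠ p.getVert (i+1) := by
      intro h
      have := getVert_injOn' hp (i := i - 1) (j := i + 1) (by omega) (by omega) h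
      omega
    have hsub : {p.getVert (i-1), p.getVert (i+1)} ⊆ G.neighborSet x := by
      intro y hy
      rcases hy with h | h
      · subst h; rw [← hgi]; exact hadj1.symm
      · simp only [Set.mem_singleton_iff] at h; subst h; rw [← hgi]; exact hadj2
    calc (2:ℕ) = ({p.getVert (i-1), p.getVert (i+1)} : Set V).ncard :=
          (Set.ncard_pair hne).symm
      _ ≤ _ := Set.ncard_le_ncard hsub (Set.toFinite _)
  -- handshake
  have hsum : ∑ v, G.degree v = 2 * G.edgeFinset.card :=
    SimpleGraph.sum_degrees_eq_twice_card_edges G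
  have hcard : G.edgeFinset.card + 1 = Fintype.card V := hT.card_edgeFinset
  set g : V → ℕ := fun x => if x = a ∨ x = b then 1 else 2 with hg
  have hge : ∀ x, g x ≤ G.degree x := by
    intro x
    rw [← deg_eq_degree]
    show (if x = a ∨ x = b then 1 else 2) ≤ PMT.deg G x
    by_cases h : x = a ∨ x = b
    · rw [if_pos h]
      exact deg_pos hT.isConnected (by omega) x
    · rw [if_neg h]
      push_neg at h
      exact hint x h.1 h.2
  have hsumg : ∑ x, g x = 2 * Fintype.card V - 2 := by
    rw [hg]
    rw [Finset.sum_ite]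
    have hfilt : Finset.univ.filter (fun x => x = a ∨ x = b) = {a, b} := by
      ext x; simp [Finset.mem_insert]
    have hfilt2 : (Finset.univ.filter (fun x => ¬(x = a ∨ x = b))).card
        = Fintype.card V - 2 := by
      have := Finset.card_filter_add_card_filter_not
        (s := Finset.univ) (p := fun x => x = a ∨ x = b)
      rw [hfilt] at this
      have h2 : ({a, b} : Finset V).card = 2 := by
        rw [Finset.card_insert_of_notMem (by simp [hab]), Finset.card_singleton]
      have hcu : (Finset.univ : Finset V).card = Fintype.card V := Finset.card_univ
      omega
    rw [Finset.sum_const, Finset.sum_const, hfilt, hfilt2]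
    have h2 : ({a, b} : Finset V).card = 2 := by
      rw [Finset.card_insert_of_notMem (by simp [hab]), Finset.card_singleton]
    rw [h2]
    simp only [smul_eq_mul]
    omega
  have hdeq : ∀ x, G.degree x = g x := by
    by_contra hcon
    push_neg at hcon
    obtain ⟨x0, hx0⟩ := hcon
    have hstrict : ∑ x, g x < ∑ x, G.degree x :=
      Finset.sum_lt_sum (fun i _ => hge i)
        ⟨x0, Finset.mem_univ _, lt_of_le_of_ne (hge x0) (Ne.symm hx0)⟩
    omega
  intro x
  rw [deg_eq_degree, hdeq x, hg]

end Aux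

namespace Aux
open SimpleGraph Walk
variable {V : Type} {G : SimpleGraph V}

lemma deg_transfer [Fintype V] {v u : V} (hvset : G.neighborSet v = {u}) {x : V}
    (hx : x ≠ v) (hxu : x ≠ u) :
    PMT.deg (G.induce {x : V | x ≠ v}) ⟨x, hx⟩ = PMT.deg G x :=
  deg_induce_of_not_adj hx (fun h => hxu ((adj_v_iff hvset x).mp h))

lemma deg_induce_le [Fintype V] (v : V) (x' : ↥{x : V | x ≠ v}) :
    PMT.deg (G.induce {x : V | x ≠ v}) x' ≤ PMT.deg G ↑x' := by
  have h := deg_induce (G := G) v ↑x' x'.2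
  rw [Subtype.coe_eta] at h
  rw [h, PMT.deg]
  exact Set.ncard_le_ncard Set.diff_subset (Set.toFinite _)

lemma caseA [Fintype V] [DecidableEq V] (hT : G.IsTree) (h3 : 3 ≤ Fintype.card V)
    (hnpath : ¬ PMT.IsPathGraph G) {v u : V} (hv : PMT.deg G v = 1)
    (hadj : G.Adj v u) (hu : PMT.deg G u = 2) :
    PMT.cT (G.induce {x : V | x ≠ v}) ≤ PMT.cT G := by
  have hvset := nbr_unique hv hadj
  have huv : u ≠ v := hadj.ne'
  have hu' : PMT.deg (G.induce {x : V | x ≠ v}) ⟨u, huv⟩ = 1 := by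
    have h := deg_induce_of_adj (G := G) huv hadj.symm
    rw [hu] at h
    omega
  have hext : ∀ (a' b' : ↥{x : V | x ≠ v})
      (q : (G.induce {x : V | x ≠ v}).Walk a' b'),
      PMT.IsCorridor (G.induce {x : V | x ≠ v}) q →
      (b' : V) = u → q.length + 1 ≤ PMT.c1 G := by
    intro a' b' q hq hbu
    obtain ⟨hq1, hq2, hq3, hq4, hq5⟩ := hq
    have hQ : (q.map (SimpleGraph.Embedding.induce {x : V | x ≠ v}).toHom).IsPath :=
      lift_isPath hq1
    have hQlen : (q.map (SimpleGraph.Embedding.induce {x : V | x ≠ v}).toHom).length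
        = q.length := Walk.length_map _ _
    have hvnot : v ∉ (q.map (SimpleGraph.Embedding.induce {x : V | x ≠ v}).toHom).support :=
      fun h => (lift_support_ne q h) rfl
    have hadj2 : G.Adj ((SimpleGraph.Embedding.induce (G := G) {x : V | x ≠ v}).toHom b') v := by
      show G.Adj (↑b') v
      rw [hbu]; exact hadj.symm
    have hQ' := isPath_concat hQ hadj2 hvnot
    have hab : a' ≠ b' := ends_ne hq1 hq2
    have hvalab : (a' : V) ≠ (b' : V) := fun h => hab (Subtype.val_injective h)
    have hcor : PMT.IsCorridor G
        ((q.map (SimpleGraph.Embedding.induce {x : V | x ≠ v}).toHom).concat hadj2) := by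
      refine ⟨hQ', by rw [Walk.length_concat]; omega, ?_, ?_, ?_⟩
      · show PMT.deg G ↑a' ≠ 2
        rw [← deg_transfer hvset a'.2 (hbu ▸ hvalab), Subtype.coe_eta]
        exact hq3
      · show PMT.deg G v ≠ 2
        rw [hv]; omega
      · intro x hx hxa hxv
        rw [Walk.support_concat, List.mem_append] at hx
        rcases hx with hx | hx
        · by_cases hxu : x = u
          · subst hxu; exact hu
          · obtain ⟨x', hx', rfl⟩ := lift_support q hx
            rw [← deg_transfer hvset x'.2 hxu, Subtype.coe_eta]
            exact hq5 x' hx' (fun h => hxa (by rw [h]; rfl))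
              (fun h => hxu (by rw [h, hbu]))
        · simp at hx; exact absurd hx hxv
    have := corridor_le_c1 hcor
    rw [Walk.length_concat, hQlen] at this
    omega
  have hkey : ∀ (a' b' : ↥{x : V | x ≠ v})
      (q : (G.induce {x : V | x ≠ v}).Walk a' b'),
      PMT.IsCorridor (G.induce {x : V | x ≠ v}) q →
      q.length ≤ PMT.c1 G ∧
      (2 < PMT.deg (G.induce {x : V | x ≠ v}) a' →
       2 < PMT.deg (G.induce {x : V | x ≠ v}) b' → q.length ≤ PMT.c2 G) := by
    intro a' b' q hq
    have hQ : (q.map (SimpleGraph.Embedding.induce {x : V | x ≠ v}).toHom).IsPath :=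
      lift_isPath hq.1
    have hQlen : (q.map (SimpleGraph.Embedding.induce {x : V | x ≠ v}).toHom).length
        = q.length := Walk.length_map _ _
    by_cases hmem : (⟨u, huv⟩ : ↥{x : V | x ≠ v}) ∈ q.support
    · have hend : (⟨u, huv⟩ : ↥{x : V | x ≠ v}) = a' ∨
          (⟨u, huv⟩ : ↥{x : V | x ≠ v}) = b' := by
        by_contra hcon
        push_neg at hcon
        have := hq.2.2.2.2 _ hmem hcon.1 hcon.2
        rw [hu'] at this
        omega
      constructor
      · rcases hend with h | h
        · have := hext b' a' q.reverse (corridor_reverse hq) (by rw [← h])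
          rw [Walk.length_reverse] at this
          omega
        · have := hext a' b' q hq (by rw [← h])
          omega
      · intro ha hb
        exfalso
        rcases hend with h | h
        · rw [← h, hu'] at ha; omega
        · rw [← h, hu'] at hb; omega
    · have hune : ∀ x ∈ (q.map (SimpleGraph.Embedding.induce {x : V | x ≠ v}).toHom).support,
          x ≠ u := by
        intro x hx hxu
        obtain ⟨x', hx', hval⟩ := lift_support q hx
        apply hmem
        have hx'eq : x' = ⟨u, huv⟩ := Subtype.val_injective (by rw [hval, hxu])
        rwa [hx'eq] at hx'
      have hainQ : (a' : V) ∈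
          (q.map (SimpleGraph.Embedding.induce {x : V | x ≠ v}).toHom).support :=
        Walk.start_mem_support _
      have hbinQ : (b' : V) ∈
          (q.map (SimpleGraph.Embedding.induce {x : V | x ≠ v}).toHom).support :=
        Walk.end_mem_support _
      have hta := deg_transfer (G := G) hvset a'.2 (hune _ hainQ)
      have htb := deg_transfer (G := G) hvset b'.2 (hune _ hbinQ)
      rw [Subtype.coe_eta] at hta htb
      have hcor : PMT.IsCorridor G
          (q.map (SimpleGraph.Embedding.induce {x : V | x ≠ v}).toHom) := by
        refine ⟨hQ, by rw [hQlen]; exact hq.2.1, ?_, ?_, ?_⟩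
        · show PMT.deg G ↑a' ≠ 2
          rw [← hta]; exact hq.2.2.1
        · show PMT.deg G ↑b' ≠ 2
          rw [← htb]; exact hq.2.2.2.1
        · intro x hx hxa hxb
          obtain ⟨x', hx', rfl⟩ := lift_support q hx
          rw [← deg_transfer hvset x'.2 (hune _ hx), Subtype.coe_eta]
          exact hq.2.2.2.2 x' hx' (fun h => hxa (by rw [h]; rfl))
            (fun h => hxb (by rw [h]; rfl))
      refine ⟨by rw [← hQlen]; exact corridor_le_c1 hcor, ?_⟩
      intro ha hb
      have h2a : 2 < PMT.deg G ↑a' := by rw [← hta]; exact ha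
      have h2b : 2 < PMT.deg G ↑b' := by rw [← htb]; exact hb
      have := corridor_le_c2 hcor h2a h2b
      rw [hQlen] at this
      exact this
  have hc1' : PMT.c1 (G.induce {x : V | x ≠ v}) ≤ PMT.c1 G :=
    c1_le (fun a' b' q hq => (hkey a' b' q hq).1)
  have hc2' : PMT.c2 (G.induce {x : V | x ≠ v}) ≤ PMT.c2 G :=
    c2_le (fun a' b' q hq ha hb => (hkey a' b' q hq).2 ha hb)
  refine le_trans (cT_le_max _) ?_
  rw [PMT.cT, if_neg hnpath]
  exact max_le (le_trans (by omega) (le_max_left _ _))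
    (le_trans (by omega) (le_max_right _ _))

lemma caseB [Fintype V] [DecidableEq V] (hT : G.IsTree) (h3 : 3 ≤ Fintype.card V)
    (hnpath : ¬ PMT.IsPathGraph G) {v u : V} (hv : PMT.deg G v = 1)
    (hadj : G.Adj v u) (hu : 4 ≤ PMT.deg G u) :
    PMT.cT (G.induce {x : V | x ≠ v}) ≤ PMT.cT G := by
  have hvset := nbr_unique hv hadj
  have huv : u ≠ v := hadj.ne'
  have hu' : PMT.deg G u = PMT.deg (G.induce {x : V | x ≠ v}) ⟨u, huv⟩ + 1 :=
    deg_induce_of_adj (G := G) huv hadj.symm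
  have hkey : ∀ (a' b' : ↥{x : V | x ≠ v})
      (q : (G.induce {x : V | x ≠ v}).Walk a' b'),
      PMT.IsCorridor (G.induce {x : V | x ≠ v}) q →
      q.length ≤ PMT.c1 G ∧
      (2 < PMT.deg (G.induce {x : V | x ≠ v}) a' →
       2 < PMT.deg (G.induce {x : V | x ≠ v}) b' → q.length ≤ PMT.c2 G) := by
    intro a' b' q hq
    have hQ : (q.map (SimpleGraph.Embedding.induce {x : V | x ≠ v}).toHom).IsPath :=
      lift_isPath hq.1
    have hQlen : (q.map (SimpleGraph.Embedding.induce {x : V | x ≠ v}).toHom).length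
        = q.length := Walk.length_map _ _
    have hdega : PMT.deg G ↑a' ≠ 2 := by
      by_cases h : (a' : V) = u
      · rw [h]; omega
      · rw [← deg_transfer hvset a'.2 h, Subtype.coe_eta]; exact hq.2.2.1
    have hdegb : PMT.deg G ↑b' ≠ 2 := by
      by_cases h : (b' : V) = u
      · rw [h]; omega
      · rw [← deg_transfer hvset b'.2 h, Subtype.coe_eta]; exact hq.2.2.2.1
    have hcor : PMT.IsCorridor G
        (q.map (SimpleGraph.Embedding.induce {x : V | x ≠ v}).toHom) := by
      refine ⟨hQ, by rw [hQlen]; exact hq.2.1, hdega, hdegb, ?_⟩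
      intro x hx hxa hxb
      obtain ⟨x', hx', rfl⟩ := lift_support q hx
      have h2 := hq.2.2.2.2 x' hx' (fun h => hxa (by rw [h]; rfl))
        (fun h => hxb (by rw [h]; rfl))
      by_cases hxu : (x' : V) = u
      · exfalso
        have hx'eq : x' = ⟨u, huv⟩ := Subtype.val_injective (by rw [hxu])
        rw [hx'eq] at h2
        omega
      · rw [← deg_transfer hvset x'.2 hxu, Subtype.coe_eta]
        exact h2
    refine ⟨by rw [← hQlen]; exact corridor_le_c1 hcor, ?_⟩
    intro ha hb
    have h2a : 2 < PMT.deg G ↑a' := by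
      by_cases h : (a' : V) = u
      · rw [h]; omega
      · rw [← deg_transfer hvset a'.2 h, Subtype.coe_eta]; exact ha
    have h2b : 2 < PMT.deg G ↑b' := by
      by_cases h : (b' : V) = u
      · rw [h]; omega
      · rw [← deg_transfer hvset b'.2 h, Subtype.coe_eta]; exact hb
    have := corridor_le_c2 hcor h2a h2b
    rw [hQlen] at this
    exact this
  have hc1' : PMT.c1 (G.induce {x : V | x ≠ v}) ≤ PMT.c1 G :=
    c1_le (fun a' b' q hq => (hkey a' b' q hq).1)
  have hc2' : PMT.c2 (G.induce {x : V | x ≠ v}) ≤ PMT.c2 G :=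
    c2_le (fun a' b' q hq ha hb => (hkey a' b' q hq).2 ha hb)
  refine le_trans (cT_le_max _) ?_
  rw [PMT.cT, if_neg hnpath]
  exact max_le (le_trans (by omega) (le_max_left _ _))
    (le_trans (by omega) (le_max_right _ _))

end Aux

namespace Aux
open SimpleGraph Walk
variable {V : Type} {G : SimpleGraph V}

lemma piece_classify [Fintype V] [DecidableEq V] (hT : G.IsTree) (h3 : 3 ≤ Fintype.card V)
    (hnA : ¬ ∃ w t, PMT.deg G w = 1 ∧ G.Adj w t ∧ PMT.deg G t = 2)
    {u z0 : V} (hu : PMT.deg G u = 3)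
    (hstar : ∀ (b : V) (r : G.Walk u b), r.IsPath → 1 ≤ r.length →
      2 < PMT.deg G b → r.getVert 1 = z0)
    {b : V} (r : G.Walk u b) (hr : PMT.IsCorridor G r) :
    (PMT.deg G b = 1 ∧ r.length = 1 ∧ G.Adj u b ∧ r.getVert 1 = b) ∨
    (2 < PMT.deg G b ∧ r.length ≤ PMT.c2 G ∧ r.getVert 1 = z0) := by
  obtain ⟨hr1, hr2, hr3, hr4, hr5⟩ := hr
  have hbpos := deg_pos hT.isConnected (by omega) b
  rcases Nat.lt_or_ge 2 (PMT.deg G b) with hj | hl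
  · exact Or.inr ⟨hj, corridor_le_c2 ⟨hr1, hr2, hr3, hr4, hr5⟩ (by omega) hj,
      hstar b r hr1 hr2 hj⟩
  · left
    have hb1 : PMT.deg G b = 1 := by omega
    have hlen1 : r.length = 1 := by
      by_contra hne
      have htadj : G.Adj (sndLast r) b := adj_sndLast r (by omega)
      have htne_u : sndLast r ≠ u := by
        intro h
        have := (sndLast_eq_start_iff hr1 (by omega)).mp h
        omega
      have htne_b : sndLast r ≠ b := sndLast_ne_end hr1 (by omega)
      have ht2 : PMT.deg G (sndLast r) = 2 :=
        hr5 _ (sndLast_mem_support r) htne_u htne_b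
      exact hnA ⟨b, sndLast r, hb1, htadj.symm, ht2⟩
    have hgv : r.getVert 1 = b := by
      have h := r.getVert_length
      rw [hlen1] at h
      exact h
    have hadju : G.Adj u b := by
      have := adj_snd r (by omega)
      rwa [hgv] at this
    exact ⟨hb1, hlen1, hadju, hgv⟩

lemma caseC [Fintype V] [DecidableEq V] (hT : G.IsTree) (h3 : 3 ≤ Fintype.card V)
    (hnpath : ¬ PMT.IsPathGraph G) {v u z0 : V} (hv : PMT.deg G v = 1)
    (hadj : G.Adj v u) (hu : PMT.deg G u = 3)
    (hnA : ¬ ∃ w t, PMT.deg G w = 1 ∧ G.Adj w t ∧ PMT.deg G t = 2)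
    (hstar : ∀ (b : V) (r : G.Walk u b), r.IsPath → 1 ≤ r.length →
      2 < PMT.deg G b → r.getVert 1 = z0) :
    PMT.cT (G.induce {x : V | x ≠ v}) ≤ PMT.cT G := by
  have hvset := nbr_unique hv hadj
  have huv : u ≠ v := hadj.ne'
  have hu' : PMT.deg (G.induce {x : V | x ≠ v}) ⟨u, huv⟩ = 2 := by
    have h := deg_induce_of_adj (G := G) huv hadj.symm
    rw [hu] at h
    omega
  -- the other two neighbors of u
  have hvmem : v ∈ G.neighborSet u := hadj.symm
  have h2 : (G.neighborSet u \ {v}).ncard = 2 := by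
    have h := Set.ncard_diff_singleton_add_one hvmem (Set.toFinite _)
    have hu3 : (G.neighborSet u).ncard = 3 := hu
    omega
  obtain ⟨y1, y2, hy12, hyset⟩ := Set.ncard_eq_two.mp h2
  have hy1mem : y1 ∈ G.neighborSet u \ {v} := by rw [hyset]; simp
  have hy2mem : y2 ∈ G.neighborSet u \ {v} := by rw [hyset]; simp
  have hy1adj : G.Adj u y1 := hy1mem.1
  have hy2adj : G.Adj u y2 := hy2mem.1
  have hy1v : y1 ≠ v := by simpa using hy1mem.2
  have hy2v : y2 ≠ v := by simpa using hy2mem.2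
  -- the edge v-u is a corridor, so c1 ≥ 1
  have hedge : PMT.IsCorridor G (Walk.cons hadj Walk.nil) := by
    refine ⟨by rw [Walk.isPath_def]; simp [hadj.ne], by simp, by rw [hv]; omega,
      by rw [hu]; omega, ?_⟩
    intro x hx hxv hxu
    simp [Walk.support_cons, Walk.support_nil] at hx
    rcases hx with h | h
    · exact absurd h hxv
    · exact absurd h hxu
  have hc1pos : 1 ≤ PMT.c1 G := by
    have := corridor_le_c1 hedge
    simpa using this
  by_cases hLL : PMT.deg G y1 = 1 ∧ PMT.deg G y2 = 1
  · -- K_{1,3} case: G' is a path graph on three vertices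
    have hNu : G.neighborSet u = {v, y1, y2} := by
      have h1 : insert v (G.neighborSet u \ {v}) = G.neighborSet u := by
        rw [Set.insert_diff_singleton]
        exact Set.insert_eq_self.mpr hvmem
      rw [← h1, hyset]
    have huniv : ∀ x, x ∈ ({u, v, y1, y2} : Set V) := by
      refine closure hT.isConnected.preconnected (x0 := u) (by simp) ?_
      intro x hx y hxy
      simp only [Set.mem_insert_iff, Set.mem_singleton_iff] at hx
      rcases hx with rfl | rfl | rfl | rfl
      · have : y ∈ G.neighborSet x := hxy
        rw [hNu] at this
        simp only [Set.mem_insert_iff, Set.mem_singleton_iff] at this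
        rcases this with rfl | rfl | rfl <;> simp
      · have : y ∈ G.neighborSet x := hxy
        rw [hvset] at this
        simp only [Set.mem_singleton_iff] at this
        subst this; simp
      · have : y ∈ G.neighborSet x := hxy
        rw [nbr_unique hLL.1 hy1adj.symm] at this
        simp only [Set.mem_singleton_iff] at this
        subst this; simp
      · have : y ∈ G.neighborSet x := hxy
        rw [nbr_unique hLL.2 hy2adj.symm] at this
        simp only [Set.mem_singleton_iff] at this
        subst this; simp
    -- covering path of G'
    have hA1 : (G.induce {x : V | x ≠ v}).Adj ⟨y1, hy1v⟩ ⟨u, huv⟩ := by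
      simpa using hy1adj.symm
    have hA2 : (G.induce {x : V | x ≠ v}).Adj ⟨u, huv⟩ ⟨y2, hy2v⟩ := by
      simpa using hy2adj
    have hy1u : y1 ≠ u := hy1adj.ne'
    have huy2 : u ≠ y2 := hy2adj.ne
    have hpath' : PMT.IsPathGraph (G.induce {x : V | x ≠ v}) := by
      refine ⟨⟨y1, hy1v⟩, ⟨y2, hy2v⟩, Walk.cons hA1 (Walk.cons hA2 Walk.nil), ?_, ?_⟩
      · rw [Walk.isPath_def]
        simp [hy1u, huy2, hy12]
      · rintro ⟨x, hx⟩
        have hmem := huniv x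
        simp only [Set.mem_insert_iff, Set.mem_singleton_iff] at hmem
        simp only [Walk.support_cons, Walk.support_nil, List.mem_cons,
          List.mem_singleton, Subtype.mk.injEq]
        rcases hmem with rfl | rfl | rfl | rfl
        · right; left; rfl
        · exact absurd rfl hx
        · left; rfl
        · right; right; left; rfl
    have hc1' : PMT.c1 (G.induce {x : V | x ≠ v}) ≤ 2 := by
      apply c1_le
      intro a' b' q hq
      have hQ : (q.map (SimpleGraph.Embedding.induce {x : V | x ≠ v}).toHom).IsPath :=
        lift_isPath hq.1
      have hQlen : (q.map (SimpleGraph.Embedding.induce {x : V | x ≠ v}).toHom).length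
          = q.length := Walk.length_map _ _
      have hsub : ∀ x ∈ (q.map (SimpleGraph.Embedding.induce {x : V | x ≠ v}).toHom).support,
          x ∈ ({u, y1, y2} : Finset V) := by
        intro x hx
        have hxv := lift_support_ne q hx
        have hmem := huniv x
        simp only [Set.mem_insert_iff, Set.mem_singleton_iff] at hmem
        rcases hmem with rfl | rfl | rfl | rfl
        · simp
        · exact absurd rfl hxv
        · simp
        · simp
      have hnd := hQ.support_nodup
      have hlen := path_support_length
        (q.map (SimpleGraph.Embedding.induce {x : V | x ≠ v}).toHom)
      have hcard : (q.map (SimpleGraph.Embedding.induce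
          {x : V | x ≠ v}).toHom).support.toFinset.card ≤ 3 := by
        apply le_trans (Finset.card_le_card ?_)
        · show ({u, y1, y2} : Finset V).card ≤ 3
          apply le_trans (Finset.card_insert_le _ _)
          have := Finset.card_insert_le y1 ({y2} : Finset V)
          simp at this ⊢
          omega
        · intro x hx
          exact hsub x (List.mem_toFinset.mp hx)
      rw [List.toFinset_card_of_nodup hnd] at hcard
      omega
    rw [PMT.cT, if_pos hpath', PMT.cT, if_neg hnpath]
    have : 2 ≤ PMT.c1 G + 1 := by omega
    exact le_trans hc1' (le_trans this (le_max_left _ _))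
  · -- main case: not both y1 y2 leaves
    have hkey : ∀ (a' b' : ↥{x : V | x ≠ v})
        (q : (G.induce {x : V | x ≠ v}).Walk a' b'),
        PMT.IsCorridor (G.induce {x : V | x ≠ v}) q →
        q.length ≤ max (PMT.c1 G) (PMT.c2 G + 1) ∧
        (2 < PMT.deg (G.induce {x : V | x ≠ v}) a' →
         2 < PMT.deg (G.induce {x : V | x ≠ v}) b' → q.length ≤ PMT.c2 G) := by
      intro a' b' q hq
      obtain ⟨Q, hQeq⟩ : ∃ Q : G.Walk (↑a' : V) ↑b',
          Q = q.map (SimpleGraph.Embedding.induce {x : V | x ≠ v}).toHom := ⟨_, rfl⟩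
      have hQ : Q.IsPath := by rw [hQeq]; exact lift_isPath hq.1
      have hQlen : Q.length = q.length := by rw [hQeq]; exact Walk.length_map _ _
      by_cases hmem : (⟨u, huv⟩ : ↥{x : V | x ≠ v}) ∈ q.support
      · -- u is internal in q
        have hnea : (⟨u, huv⟩ : ↥{x : V | x ≠ v}) ≠ a' := by
          intro h
          apply hq.2.2.1
          rw [← h]
          exact hu'
        have hneb : (⟨u, huv⟩ : ↥{x : V | x ≠ v}) ≠ b' := by
          intro h
          apply hq.2.2.2.1
          rw [← h]
          exact hu'
        have hvala : (a' : V) ≠ u := fun h => hnea (Subtype.val_injective (by rw [h])).symm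
        have hvalb : (b' : V) ≠ u := fun h => hneb (Subtype.val_injective (by rw [h])).symm
        have hmemQ : u ∈ Q.support := by
          have h : u ∈ (q.map (SimpleGraph.Embedding.induce {x : V | x ≠ v}).toHom).support := by
            rw [Walk.support_map]
            exact List.mem_map_of_mem hmem
          rw [hQeq]; exact h
        -- split Q at u
        have hQ1 : (Q.takeUntil u hmemQ).IsPath := hQ.takeUntil hmemQ
        have hQ2 : (Q.dropUntil u hmemQ).IsPath := hQ.dropUntil hmemQ
        have hlensum : (Q.takeUntil u hmemQ).length + (Q.dropUntil u hmemQ).length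
            = Q.length := by
          have h := congrArg Walk.length (Q.take_spec hmemQ)
          rwa [Walk.length_append] at h
        have hlen1 : 1 ≤ (Q.takeUntil u hmemQ).length := by
          rcases Nat.eq_zero_or_pos (Q.takeUntil u hmemQ).length with h0 | h
          · exact absurd (Walk.eq_of_length_eq_zero h0) hvala
          · omega
        have hlen2 : 1 ≤ (Q.dropUntil u hmemQ).length := by
          rcases Nat.eq_zero_or_pos (Q.dropUntil u hmemQ).length with h0 | h
          · exact absurd (Walk.eq_of_length_eq_zero h0).symm hvalb
          · omega
        -- disjointness of the two parts
        have hnodup := hQ.support_nodup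
        have hdisj : List.Disjoint (Q.takeUntil u hmemQ).support
            (Q.dropUntil u hmemQ).support.tail := by
          have h := hnodup
          rw [← Q.take_spec hmemQ, Walk.support_append] at h
          exact List.disjoint_of_nodup_append h
        -- membership transfer helper
        have htrans : ∀ x ∈ Q.support, x ≠ (a' : V) → x ≠ (b' : V) → x ≠ u →
            PMT.deg G x = 2 := by
          intro x hx hxa hxb hxu
          have hx' : x ∈ (q.map (SimpleGraph.Embedding.induce
              {x : V | x ≠ v}).toHom).support := by rw [← hQeq]; exact hx
          obtain ⟨x', hx'q, rfl⟩ := lift_support q hx'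
          rw [← deg_transfer hvset x'.2 hxu, Subtype.coe_eta]
          exact hq.2.2.2.2 x' hx'q (fun h => hxa (by simp [h]))
            (fun h => hxb (by simp [h]))
        have hdega : PMT.deg G ↑a' ≠ 2 := by
          rw [← deg_transfer hvset a'.2 hvala, Subtype.coe_eta]
          exact hq.2.2.1
        have hdegb : PMT.deg G ↑b' ≠ 2 := by
          rw [← deg_transfer hvset b'.2 hvalb, Subtype.coe_eta]
          exact hq.2.2.2.1
        -- the two pieces as corridors from u
        have hbin2 : (b' : V) ∈ (Q.dropUntil u hmemQ).support.tail := by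
          have h := Walk.end_mem_support (Q.dropUntil u hmemQ)
          rw [(Q.dropUntil u hmemQ).support_eq_cons] at h
          rcases List.mem_cons.mp h with h | h
          · exact absurd h hvalb
          · exact h
        have hain1 : (a' : V) ∈ (Q.takeUntil u hmemQ).support :=
          Walk.start_mem_support _
        have hcor1 : PMT.IsCorridor G (Q.takeUntil u hmemQ).reverse := by
          refine ⟨hQ1.reverse, by rw [Walk.length_reverse]; omega,
            by rw [hu]; omega, hdega, ?_⟩
          intro x hx hxu hxa
          rw [Walk.support_reverse, List.mem_reverse] at hx
          have hxb : x ≠ (b' : V) := by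
            intro h
            subst h
            exact hdisj hx hbin2
          exact htrans x (Q.support_takeUntil_subset hmemQ hx) hxa hxb hxu
        have hcor2 : PMT.IsCorridor G (Q.dropUntil u hmemQ) := by
          refine ⟨hQ2, by omega, by rw [hu]; omega, hdegb, ?_⟩
          intro x hx hxu hxb
          have hxa : x ≠ (a' : V) := by
            intro h
            have hxt : x ∈ (Q.dropUntil u hmemQ).support.tail := by
              rw [(Q.dropUntil u hmemQ).support_eq_cons] at hx
              rcases List.mem_cons.mp hx with h' | h'
              · exact absurd h' hxu
              · exact h'
            exact hdisj (by rw [h]; exact hain1) hxt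
          exact htrans x (Q.support_dropUntil_subset hmemQ hx) hxa hxb hxu
        -- second vertices of the two pieces are distinct
        have hw1mem : (Q.takeUntil u hmemQ).reverse.getVert 1 ∈
            (Q.takeUntil u hmemQ).support := by
          have h := getVert_mem_support ((Q.takeUntil u hmemQ).reverse) 1
          rwa [Walk.support_reverse, List.mem_reverse] at h
        have hw2ne : (Q.dropUntil u hmemQ).getVert 1 ≠ u := by
          intro h
          have h0 : (Q.dropUntil u hmemQ).getVert 0 = u := Walk.getVert_zero _
          have := getVert_injOn' hQ2 (i := 1) (j := 0) (by omega) (by omega)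
            (by rw [h, h0])
          omega
        have hw2mem : (Q.dropUntil u hmemQ).getVert 1 ∈
            (Q.dropUntil u hmemQ).support.tail := by
          have h := getVert_mem_support (Q.dropUntil u hmemQ) 1
          rw [(Q.dropUntil u hmemQ).support_eq_cons] at h
          rcases List.mem_cons.mp h with h | h
          · exact absurd h hw2ne
          · exact h
        have hwne : (Q.takeUntil u hmemQ).reverse.getVert 1 ≠
            (Q.dropUntil u hmemQ).getVert 1 := by
          intro h
          exact hdisj hw1mem (h ▸ hw2mem)
        -- classify the pieces
        have hp1 := piece_classify hT h3 hnA hu hstar _ hcor1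
        have hp2 := piece_classify hT h3 hnA hu hstar _ hcor2
        constructor
        · rcases hp1 with ⟨hl1, hL1, hadj1, hgv1⟩ | ⟨hj1, hc1, hz1⟩
          · rcases hp2 with ⟨hl2, hL2, hadj2, hgv2⟩ | ⟨hj2, hc2, hz2⟩
            · -- both leaves: contradiction with hLL
              exfalso
              have ha'mem : (a' : V) ∈ G.neighborSet u \ {v} := ⟨hadj1, a'.2⟩
              have hb'mem : (b' : V) ∈ G.neighborSet u \ {v} := ⟨hadj2, b'.2⟩
              rw [hyset] at ha'mem hb'mem
              simp only [Set.mem_insert_iff, Set.mem_singleton_iff] at ha'mem hb'mem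
              have hvalab : (a' : V) ≠ (b' : V) := by
                intro h
                have hab := ends_ne hq.1 hq.2.1
                exact hab (Subtype.val_injective h)
              apply hLL
              rcases ha'mem with h1 | h1 <;> rcases hb'mem with h2 | h2
              · exact absurd (h1 ▸ h2 ▸ rfl : (a' : V) = (b' : V)) hvalab
              · exact ⟨h1 ▸ hl1, h2 ▸ hl2⟩
              · exact ⟨h2 ▸ hl2, h1 ▸ hl1⟩
              · exact absurd (h1 ▸ h2 ▸ rfl : (a' : V) = (b' : V)) hvalab
            · -- leaf, junction
              have : q.length ≤ PMT.c2 G + 1 := by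
                rw [← hQlen, ← hlensum]
                rw [Walk.length_reverse] at hL1
                omega
              omega
          · rcases hp2 with ⟨hl2, hL2, hadj2, hgv2⟩ | ⟨hj2, hc2, hz2⟩
            · -- junction, leaf
              have : q.length ≤ PMT.c2 G + 1 := by
                rw [← hQlen, ← hlensum]
                rw [Walk.length_reverse] at hc1
                omega
              omega
            · -- both junctions: contradiction
              exfalso
              exact hwne (by rw [hz1, hz2])
        · intro ha hb
          exfalso
          have hga : 2 < PMT.deg G ↑a' := by
            rw [← deg_transfer hvset a'.2 hvala, Subtype.coe_eta]; exact ha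
          have hgb : 2 < PMT.deg G ↑b' := by
            rw [← deg_transfer hvset b'.2 hvalb, Subtype.coe_eta]; exact hb
          rcases hp1 with ⟨hl1, _, _, _⟩ | ⟨_, _, hz1⟩
          · omega
          · rcases hp2 with ⟨hl2, _, _, _⟩ | ⟨_, _, hz2⟩
            · omega
            · exact hwne (by rw [hz1, hz2])
      · -- u not in q: full transfer
        have hune : ∀ x ∈ Q.support, x ≠ u := by
          intro x hx hxu
          have hx' : x ∈ (q.map (SimpleGraph.Embedding.induce
              {x : V | x ≠ v}).toHom).support := by rw [← hQeq]; exact hx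
          obtain ⟨x', hx'q, hval⟩ := lift_support q hx'
          apply hmem
          have hx'eq : x' = ⟨u, huv⟩ := Subtype.val_injective (by rw [hval, hxu])
          rwa [hx'eq] at hx'q
        have hta := deg_transfer (G := G) hvset a'.2
          (hune _ (Walk.start_mem_support Q))
        have htb := deg_transfer (G := G) hvset b'.2
          (hune _ (Walk.end_mem_support Q))
        rw [Subtype.coe_eta] at hta htb
        have hcor : PMT.IsCorridor G Q := by
          refine ⟨hQ, by rw [hQlen]; exact hq.2.1, by rw [← hta]; exact hq.2.2.1,
            by rw [← htb]; exact hq.2.2.2.1, ?_⟩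
          intro x hx hxa hxb
          have hx' : x ∈ (q.map (SimpleGraph.Embedding.induce
              {x : V | x ≠ v}).toHom).support := by rw [← hQeq]; exact hx
          obtain ⟨x', hx'q, rfl⟩ := lift_support q hx'
          rw [← deg_transfer hvset x'.2 (hune _ hx), Subtype.coe_eta]
          exact hq.2.2.2.2 x' hx'q (fun h => hxa (by simp [h]))
            (fun h => hxb (by simp [h]))
        constructor
        · have := corridor_le_c1 hcor
          rw [hQlen] at this
          exact le_trans this (le_max_left _ _)
        · intro ha hb
          have := corridor_le_c2 hcor (by rw [← hta]; exact ha) (by rw [← htb]; exact hb)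
          rwa [hQlen] at this
    have hc1' : PMT.c1 (G.induce {x : V | x ≠ v}) ≤ max (PMT.c1 G) (PMT.c2 G + 1) :=
      c1_le (fun a' b' q hq => (hkey a' b' q hq).1)
    have hc2' : PMT.c2 (G.induce {x : V | x ≠ v}) ≤ PMT.c2 G :=
      c2_le (fun a' b' q hq ha hb => (hkey a' b' q hq).2 ha hb)
    refine le_trans (cT_le_max _) ?_
    rw [PMT.cT, if_neg hnpath]
    have h1 : PMT.c1 (G.induce {x : V | x ≠ v}) + 1 ≤
        max (PMT.c1 G + 1) (PMT.c2 G + 2) := by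
      rcases max_cases (PMT.c1 G) (PMT.c2 G + 1) with ⟨heq, _⟩ | ⟨heq, _⟩ <;>
        rw [heq] at hc1' <;> omega
    have h2 : PMT.c2 (G.induce {x : V | x ≠ v}) + 2 ≤
        max (PMT.c1 G + 1) (PMT.c2 G + 2) := by
      have := le_max_right (PMT.c1 G + 1) (PMT.c2 G + 2)
      omega
    exact max_le h1 h2

end Aux

namespace Aux
open SimpleGraph Walk
variable {V : Type} {G : SimpleGraph V}

lemma casePath [Fintype V] [DecidableEq V] (hT : G.IsTree) (h3 : 3 ≤ Fintype.card V)
    (hpath : PMT.IsPathGraph G) {v : V} (hv : PMT.deg G v = 1) :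
    PMT.cT (G.induce {x : V | x ≠ v}) ≤ PMT.cT G := by
  obtain ⟨a, b, p, hp, hcov⟩ := hpath
  have hdegs := cover_path_degs hT h3 hp hcov
  have hlen : p.length + 1 = Fintype.card V := by
    have hnd := hp.support_nodup
    have huniv : p.support.toFinset = Finset.univ :=
      Finset.eq_univ_iff_forall.mpr (fun x => List.mem_toFinset.mpr (hcov x))
    have h := List.toFinset_card_of_nodup hnd
    rw [huniv] at h
    simp only [Finset.card_univ] at h
    have h2 := path_support_length p
    omega
  have hab : a ≠ b := ends_ne hp (by omega)
  have hcorr : PMT.IsCorridor G p := by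
    refine ⟨hp, by omega, ?_, ?_, ?_⟩
    · rw [hdegs a]; simp
    · rw [hdegs b]; simp
    · intro x hx hxa hxb
      rw [hdegs x, if_neg (by tauto)]
  have hc1G := corridor_le_c1 hcorr
  have hle2 : ∀ x, PMT.deg G x ≤ 2 := by
    intro x
    rw [hdegs x]
    split <;> omega
  have hc1' : PMT.c1 (G.induce {x : V | x ≠ v}) ≤ Fintype.card V - 2 := by
    apply c1_le
    intro a' b' q hq
    have hQ : (q.map (SimpleGraph.Embedding.induce {x : V | x ≠ v}).toHom).IsPath :=
      lift_isPath hq.1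
    have hQlen : (q.map (SimpleGraph.Embedding.induce {x : V | x ≠ v}).toHom).length
        = q.length := Walk.length_map _ _
    have hnd := hQ.support_nodup
    have hsub : (q.map (SimpleGraph.Embedding.induce
        {x : V | x ≠ v}).toHom).support.toFinset ⊆ Finset.univ.erase v := by
      intro x hx
      rw [Finset.mem_erase]
      exact ⟨lift_support_ne q (List.mem_toFinset.mp hx), Finset.mem_univ _⟩
    have hcard := Finset.card_le_card hsub
    rw [List.toFinset_card_of_nodup hnd] at hcard
    rw [Finset.card_erase_of_mem (Finset.mem_univ _), Finset.card_univ] at hcard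
    have hsl := path_support_length
      (q.map (SimpleGraph.Embedding.induce {x : V | x ≠ v}).toHom)
    omega
  have hc2' : PMT.c2 (G.induce {x : V | x ≠ v}) = 0 := by
    refine le_antisymm (c2_le ?_) (Nat.zero_le _)
    intro a' b' q hq ha hb
    exfalso
    have h1 := deg_induce_le (G := G) v a'
    have h2 := hle2 ↑a'
    omega
  have hcTG : PMT.cT G = PMT.c1 G := by
    rw [PMT.cT, if_pos ⟨a, b, p, hp, hcov⟩]
  rw [hcTG]
  refine le_trans (cT_le_max _) ?_
  apply max_le
  · omega
  · omega

end Aux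

/-- every tree with at least 3 vertices has a leaf `v` such that
`c(Tᵛ) ≤ c(T)`. -/
theorem exists_good_leaf {V : Type} [Fintype V] (G : SimpleGraph V)
    (hT : G.IsTree) (h3 : 3 ≤ Fintype.card V) :
    ∃ v : V, PMT.deg G v = 1 ∧
      PMT.cT (G.induce {x : V | x ≠ v}) ≤ PMT.cT G := by
  classical
  have hconn := hT.isConnected
  obtain ⟨v0, hv0⟩ := Aux.exists_leaf hT (by omega)
  by_cases hpath : PMT.IsPathGraph G
  · exact ⟨v0, hv0, Aux.casePath hT h3 hpath hv0⟩
  by_cases hA : ∃ (w t : V), PMT.deg G w = 1 ∧ G.Adj w t ∧ PMT.deg G t = 2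
  · obtain ⟨w, t, hw, hwt, ht⟩ := hA
    exact ⟨w, hw, Aux.caseA hT h3 hpath hw hwt ht⟩
  by_cases hB : ∃ (w t : V), PMT.deg G w = 1 ∧ G.Adj w t ∧ 4 ≤ PMT.deg G t
  · obtain ⟨w, t, hw, hwt, ht⟩ := hB
    exact ⟨w, hw, Aux.caseB hT h3 hpath hw hwt ht⟩
  -- every leaf has a neighbor of degree exactly 3
  have hleafnbr : ∀ w t : V, PMT.deg G w = 1 → G.Adj w t → PMT.deg G t = 3 := by
    intro w t hw hwt
    have htset := Aux.nbr_unique hw hwt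
    have h1 : PMT.deg G t ≠ 2 := fun h => hA ⟨w, t, hw, hwt, h⟩
    have h2 : PMT.deg G t < 4 := by
      by_contra h
      exact hB ⟨w, t, hw, hwt, by omega⟩
    have h3' : 1 ≤ PMT.deg G t := Aux.deg_pos hconn (by omega) t
    have h4 : PMT.deg G t ≠ 1 := by
      intro h
      have htw : G.Adj t w := hwt.symm
      have htset2 := Aux.nbr_unique h htw
      have huniv : ∀ x, x ∈ ({w, t} : Set V) := by
        refine Aux.closure hconn.preconnected (x0 := w) (by simp) ?_
        intro x hx y hxy
        simp only [Set.mem_insert_iff, Set.mem_singleton_iff] at hx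
        rcases hx with rfl | rfl
        · have : y ∈ G.neighborSet x := hxy
          rw [htset] at this
          simp only [Set.mem_singleton_iff] at this
          subst this; simp
        · have : y ∈ G.neighborSet x := hxy
          rw [htset2] at this
          simp only [Set.mem_singleton_iff] at this
          subst this; simp
      have hsub : (Set.univ : Set V) ⊆ {w, t} := fun x _ => huniv x
      have hcard := Set.ncard_le_ncard hsub (Set.toFinite _)
      rw [Set.ncard_univ, Nat.card_eq_fintype_card] at hcard
      have : ({w, t} : Set V).ncard ≤ 2 :=
        le_trans (Set.ncard_insert_le _ _) (by simp)
      omega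
    omega
  -- the unique neighbor of v0 is a junction
  obtain ⟨t0, ht0set⟩ := Set.ncard_eq_one.mp hv0
  have ht0adj : G.Adj v0 t0 := by
    have : t0 ∈ G.neighborSet v0 := by rw [ht0set]; simp
    exact this
  have ht0deg : PMT.deg G t0 = 3 := hleafnbr v0 t0 hv0 ht0adj
  -- pick a junction u at maximal distance from v0
  have hJne : (Finset.univ.filter (fun x => 2 < PMT.deg G x)).Nonempty :=
    ⟨t0, by simp [ht0deg]⟩
  obtain ⟨u, huJ, hmax⟩ := Finset.exists_max_image
    (Finset.univ.filter (fun x => 2 < PMT.deg G x)) (fun x => G.dist v0 x) hJne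
  have hudeg : 2 < PMT.deg G u := by
    simpa using (Finset.mem_filter.mp huJ).2
  obtain ⟨p, hp, hpl⟩ := (hconn.preconnected v0 u).exists_path_of_dist
  have hv0u : v0 ≠ u := by
    intro h
    rw [← h, hv0] at hudeg
    omega
  have hlenp : 1 ≤ p.length := by
    rcases Nat.eq_zero_or_pos p.length with h0 | h
    · exact absurd (Walk.eq_of_length_eq_zero h0) hv0u
    · omega
  -- star property
  have hstar : ∀ (b : V) (r : G.Walk u b), r.IsPath → 1 ≤ r.length →
      2 < PMT.deg G b → r.getVert 1 = Aux.sndLast p := by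
    intro b r hr hrl hbj
    by_cases hzmem : r.getVert 1 ∈ p.support
    · exact Aux.adj_mem_eq_sndLast hT hp hlenp hzmem (Aux.adj_snd r hrl).symm
    · exfalso
      have hW : (p.append r).IsPath := Aux.append_isPath hT hp hr hrl hzmem
      have hWlen := Aux.path_length_eq_dist hT hW
      rw [Walk.length_append] at hWlen
      have hbmax : G.dist v0 b ≤ G.dist v0 u := hmax b (by simp [hbj])
      omega
  -- find a leaf neighbor of u
  have hy : ∃ y ∈ G.neighborSet u, y ≠ Aux.sndLast p := by
    by_contra hcon
    push_neg at hcon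
    have hsub : G.neighborSet u ⊆ {Aux.sndLast p} := fun y hy => hcon y hy
    have := Set.ncard_le_ncard hsub (Set.toFinite _)
    rw [Set.ncard_singleton] at this
    have : PMT.deg G u ≤ 1 := this
    omega
  obtain ⟨y, hymem, hyne⟩ := hy
  have hyadj : G.Adj u y := hymem
  obtain ⟨e', p', P1, P2, P3, P4, P5⟩ := Aux.exists_corridor_from_edge hT hyadj
  have he'deg : PMT.deg G e' = 1 := by
    have hpos := Aux.deg_pos hconn (by omega) e'
    rcases Nat.lt_or_ge 2 (PMT.deg G e') with hgt | hle
    · exfalso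
      have := hstar e' p' P1 P2 hgt
      rw [P4] at this
      exact hyne this
    · omega
  have hplen1 : p'.length = 1 := by
    by_contra hne
    have hge2 : 2 ≤ p'.length := by omega
    have htadj : G.Adj (Aux.sndLast p') e' := Aux.adj_sndLast p' (by omega)
    have htne_u : Aux.sndLast p' ≠ u := by
      intro h
      have := (Aux.sndLast_eq_start_iff P1 (by omega)).mp h
      omega
    have htne_e : Aux.sndLast p' ≠ e' := Aux.sndLast_ne_end P1 (by omega)
    have ht2 : PMT.deg G (Aux.sndLast p') = 2 :=
      P3 _ (Aux.sndLast_mem_support p') htne_u htne_e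
    exact hA ⟨e', Aux.sndLast p', he'deg, htadj.symm, ht2⟩
  have hey : e' = y := by
    have h := p'.getVert_length
    rw [hplen1] at h
    rw [← h, P4]
  have hydeg : PMT.deg G y = 1 := hey ▸ he'deg
  have hudeg3 : PMT.deg G u = 3 := by
    have h1 : PMT.deg G u < 4 := by
      by_contra h
      exact hB ⟨y, u, hydeg, hyadj.symm, by omega⟩
    omega
  exact ⟨y, hydeg, Aux.caseC hT h3 hpath hydeg hyadj.symm hudeg3 hA hstar⟩
end

section
/- Let T be a tree with at least 3 vertices and let v be a leaf of T whose unique neighbor has degree exactly 2. Then c₁(Tᵛ) ≤ c₁(T) and consequently c(Tᵛ) ≤ c(T), where Tᵛ is the tree obtained from T by removing v. -/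
namespace PMT

variable {V : Type}

open SimpleGraph

lemma deg_induce (G : SimpleGraph V) (s : Set V) (a : s) :
    deg (G.induce s) a = (s ∩ G.neighborSet a.1).ncard := by
  have himg : Subtype.val '' ((G.induce s).neighborSet a) = s ∩ G.neighborSet a.1 := by
    ext x
    simp [SimpleGraph.neighborSet, SimpleGraph.comap_adj]
    aesop
  rw [deg, ← Set.ncard_image_of_injective _ Subtype.val_injective, himg]

lemma lift_walk {G : SimpleGraph V} {s : Set V} {a b : V} (p : G.Walk a b)
    (hp : ∀ x ∈ p.support, x ∈ s) (ha : a ∈ s) (hb : b ∈ s) :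
    ∃ q : (G.induce s).Walk ⟨a, ha⟩ ⟨b, hb⟩,
      q.map (SimpleGraph.Embedding.induce s).toHom = p := by
  induction p with
  | nil => exact ⟨.nil, rfl⟩
  | @cons u c d h p ih =>
      have hc : c ∈ s := hp c (by simp)
      obtain ⟨q, hq⟩ := ih (fun x hx => hp x (by simp [hx])) hc hb
      exact ⟨.cons (by exact h) q, by subst hq; rfl⟩

lemma isCorridor_reverse {G : SimpleGraph V} {a b : V} {p : G.Walk a b}
    (h : IsCorridor G p) : IsCorridor G p.reverse := by
  obtain ⟨h1, h2, h3, h4, h5⟩ := h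
  exact ⟨h1.reverse, by simpa using h2, h4, h3,
    fun x hx hxb hxa => h5 x (by simpa using hx) hxa hxb⟩

section main

variable {G : SimpleGraph V} {v w : V}
  (hleaf : deg G v = 1) (hadj : G.Adj v w)

include hleaf hadj

lemma nbhd_v : G.neighborSet v = {w} := by
  obtain ⟨a, ha⟩ := Set.ncard_eq_one.mp hleaf
  have : w ∈ G.neighborSet v := hadj
  rw [ha] at this ⊢
  simp at this
  rw [this]

lemma adj_v_iff {x : V} : G.Adj x v ↔ x = w := by
  have := nbhd_v hleaf hadj
  constructor
  · intro h
    have : x ∈ G.neighborSet v := h.symm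
    rw [nbhd_v hleaf hadj] at this; exact this
  · rintro rfl; exact hadj.symm

lemma deg_induce_ne (a : {x : V | x ≠ v}) (haw : a.1 ≠ w) :
    deg (G.induce {x : V | x ≠ v}) a = deg G a.1 := by
  rw [deg_induce]
  congr 1
  ext x
  simp only [Set.mem_inter_iff, Set.mem_setOf_eq, SimpleGraph.mem_neighborSet]
  constructor
  · exact fun h => h.2
  · intro h
    refine ⟨fun hx => haw ?_, h⟩
    subst hx
    exact (adj_v_iff hleaf hadj).mp h

lemma deg_induce_w [Fintype V] (hw : deg G w = 2) (hww : w ∈ {x : V | x ≠ v}) :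
    deg (G.induce {x : V | x ≠ v}) ⟨w, hww⟩ = 1 := by
  rw [deg_induce]
  have hset : {x : V | x ≠ v} ∩ G.neighborSet w = G.neighborSet w \ {v} := by
    ext x; simp [and_comm]
  rw [hset]
  have h2 := Set.ncard_diff_singleton_of_mem (show v ∈ G.neighborSet w from hadj.symm)
  rw [deg] at hw
  omega

end main

section transfer

variable [Fintype V] {G : SimpleGraph V} {v w : V}

lemma corridor_transfer_half (hleaf : deg G v = 1) (hadj : G.Adj v w)
    (hw : deg G w = 2)
    {a b : {x : V | x ≠ v}} (q : (G.induce {x : V | x ≠ v}).Walk a b)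
    (hq : IsCorridor (G.induce {x : V | x ≠ v}) q) (hbw : b.1 ≠ w) :
    ∃ (a' b' : V) (p : G.Walk a' b'), IsCorridor G p ∧ q.length ≤ p.length ∧
      deg (G.induce {x : V | x ≠ v}) a ≤ deg G a' ∧
      deg (G.induce {x : V | x ≠ v}) b ≤ deg G b' := by
  obtain ⟨hq1, hq2, hq3, hq4, hq5⟩ := hq
  obtain ⟨p, hpdef⟩ : ∃ p : G.Walk a.1 b.1,
      p = q.map (Embedding.induce {x : V | x ≠ v}).toHom := ⟨_, rfl⟩
  have hpath : p.IsPath := by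
    rw [hpdef]
    exact Walk.map_isPath_of_injective
      (f := (Embedding.induce {x : V | x ≠ v}).toHom) Subtype.val_injective hq1
  have hlen : p.length = q.length := by rw [hpdef]; exact Walk.length_map _ _
  have hmem : ∀ x ∈ p.support, ∃ y ∈ q.support, y.1 = x := by
    intro x hx
    have hx' : x ∈ (q.map (Embedding.induce {x : V | x ≠ v}).toHom).support := by
      rw [hpdef] at hx; exact hx
    rw [Walk.support_map] at hx'
    have hx := hx'
    obtain ⟨y, hy, hyx⟩ := List.mem_map.mp hx
    exact ⟨y, hy, hyx⟩
  have hab : a ≠ b := by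
    intro h
    subst h
    rw [(Walk.isPath_iff_eq_nil (p := q)).mp hq1] at hq2
    simp at hq2
  have hdeg_b : deg G b.1 = deg (G.induce {x : V | x ≠ v}) b :=
    (deg_induce_ne hleaf hadj b hbw).symm
  by_cases haw : a.1 = w
  · -- extend through v
    have hvp : v ∉ p.support := by
      intro hv
      obtain ⟨y, _, hy⟩ := hmem v hv
      exact y.2 hy
    have hadj' : G.Adj v a.1 := haw ▸ hadj
    refine ⟨v, b.1, Walk.cons hadj' p, ⟨?_, ?_, ?_, ?_, ?_⟩, ?_, ?_, ?_⟩
    · exact (Walk.cons_isPath_iff _ _).mpr ⟨hpath, hvp⟩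
    · simp
    · rw [deg, nbhd_v hleaf hadj]
      simp
    · rw [hdeg_b]; exact hq4
    · intro x hx hxv hxb
      rw [Walk.support_cons, List.mem_cons] at hx
      rcases hx with hx | hx
      · exact absurd hx hxv
      · obtain ⟨y, hy, rfl⟩ := hmem x hx
        by_cases hyw : y.1 = w
        · rw [hyw, hw]
        · have hya : y ≠ a := fun h => hyw (by rw [h, haw])
          have hyb : y ≠ b := fun h => hxb (congrArg Subtype.val h)
          rw [← deg_induce_ne hleaf hadj y hyw]
          exact hq5 y hy hya hyb
    · rw [Walk.length_cons, hlen]; omega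
    · have ha : a = ⟨w, fun h => hadj.ne (h ▸ rfl)⟩ := Subtype.ext haw
      rw [ha, deg_induce_w hleaf hadj hw, hleaf]
    · rw [hdeg_b]
  · -- straight transfer
    have hwne : ∀ y ∈ q.support, y.1 ≠ w := by
      intro y hy hyw
      have hya : y ≠ a := fun h => haw (h ▸ hyw)
      have hyb : y ≠ b := fun h => hbw (h ▸ hyw)
      have h2 := hq5 y hy hya hyb
      have hy' : y = ⟨w, fun h => hadj.ne (h ▸ rfl)⟩ := Subtype.ext hyw
      rw [hy', deg_induce_w hleaf hadj hw] at h2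
      omega
    have hdeg_a : deg G a.1 = deg (G.induce {x : V | x ≠ v}) a :=
      (deg_induce_ne hleaf hadj a haw).symm
    refine ⟨a.1, b.1, p, ⟨hpath, by omega, ?_, ?_, ?_⟩, by omega, hdeg_a.ge, hdeg_b.ge⟩
    · rw [hdeg_a]; exact hq3
    · rw [hdeg_b]; exact hq4
    · intro x hx hxa hxb
      obtain ⟨y, hy, rfl⟩ := hmem x hx
      have hya : y ≠ a := fun h => hxa (congrArg Subtype.val h)
      have hyb : y ≠ b := fun h => hxb (congrArg Subtype.val h)
      rw [← deg_induce_ne hleaf hadj y (hwne y hy)]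
      exact hq5 y hy hya hyb

lemma corridor_transfer (hleaf : deg G v = 1) (hadj : G.Adj v w)
    (hw : deg G w = 2)
    {a b : {x : V | x ≠ v}} (q : (G.induce {x : V | x ≠ v}).Walk a b)
    (hq : IsCorridor (G.induce {x : V | x ≠ v}) q) :
    ∃ (a' b' : V) (p : G.Walk a' b'), IsCorridor G p ∧ q.length ≤ p.length ∧
      deg (G.induce {x : V | x ≠ v}) a ≤ deg G a' ∧
      deg (G.induce {x : V | x ≠ v}) b ≤ deg G b' := by
  by_cases hbw : b.1 ≠ w
  · exact corridor_transfer_half hleaf hadj hw q hq hbw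
  · push_neg at hbw
    have haw : a.1 ≠ w := by
      intro haw
      have hab : a ≠ b := by
        intro h
        subst h
        rw [(Walk.isPath_iff_eq_nil (p := q)).mp hq.1] at hq
        simp [IsCorridor] at hq
      exact hab (Subtype.ext (haw.trans hbw.symm))
    obtain ⟨a', b', p, hp, hlen, hda, hdb⟩ :=
      corridor_transfer_half hleaf hadj hw q.reverse (isCorridor_reverse hq) haw
    exact ⟨b', a', p.reverse, isCorridor_reverse hp, by simpa using hlen, hdb, hda⟩

end transfer

lemma isPathGraph_of_end {G : SimpleGraph V} {v w b : V} (hadj : G.Adj v w)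
    (p : G.Walk v b) (hp : p.IsPath) (hall : ∀ x : V, x ∈ p.support) :
    IsPathGraph (G.induce {x : V | x ≠ v}) := by
  cases p with
  | nil => exact (hadj.ne' (by simpa using hall w)).elim
  | @cons _ c _ h q =>
      rw [Walk.cons_isPath_iff] at hp
      obtain ⟨hq, hvq⟩ := hp
      have hmem : ∀ x ∈ q.support, x ∈ {x : V | x ≠ v} :=
        fun x hx hxv => hvq (hxv ▸ hx)
      obtain ⟨q', hq'⟩ := lift_walk q hmem (hmem _ q.start_mem_support)
        (hmem _ q.end_mem_support)
      refine ⟨_, _, q', ?_, ?_⟩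
      · exact Walk.IsPath.of_map (f := (Embedding.induce _).toHom) (hq'.symm ▸ hq)
      · intro x
        have hx : x.1 ∈ q.support := by
          have := hall x.1
          rw [Walk.support_cons, List.mem_cons] at this
          exact this.resolve_left x.2
        have hx' : x.1 ∈ (q'.map (Embedding.induce {x : V | x ≠ v}).toHom).support := by
          rw [← hq'] at hx; exact hx
        rw [Walk.support_map] at hx'
        have hx := hx'
        obtain ⟨y, hy, hyx⟩ := List.mem_map.mp hx
        rwa [show x = y from Subtype.ext hyx.symm]

lemma isPathGraph_induce {G : SimpleGraph V} {v w : V}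
    (hleaf : deg G v = 1) (hadj : G.Adj v w) (hG : IsPathGraph G) :
    IsPathGraph (G.induce {x : V | x ≠ v}) := by
  classical
  obtain ⟨a, b, p, hp, hall⟩ := hG
  have hv : v ∈ p.support := hall v
  have hend : v = a ∨ v = b := by
    by_contra hcon
    push_neg at hcon
    obtain ⟨hva, hvb⟩ := hcon
    have hsp := p.take_spec hv
    have hnodup : ((p.takeUntil v hv).support ++ (p.dropUntil v hv).support.tail).Nodup := by
      have h := hp.support_nodup
      rw [← hsp, Walk.support_append] at h
      exact h
    have h2 : w ∈ (p.dropUntil v hv).support.tail := by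
      generalize p.dropUntil v hv = q₂
      cases q₂ with
      | nil => exact absurd rfl hvb
      | @cons _ c _ h q =>
          have hcw : c = w := (adj_v_iff hleaf hadj).mp h.symm
          rw [Walk.support_cons]
          simpa [hcw] using q.start_mem_support
    have h1 : w ∈ (p.takeUntil v hv).support := by
      have hr : w ∈ (p.takeUntil v hv).reverse.support := by
        generalize (p.takeUntil v hv).reverse = q₁
        cases q₁ with
        | nil => exact absurd rfl hva
        | @cons _ c _ h q =>
            have hcw : c = w := (adj_v_iff hleaf hadj).mp h.symm
            rw [Walk.support_cons]
            exact List.mem_cons_of_mem _ (hcw ▸ q.start_mem_support)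
      rwa [Walk.support_reverse, List.mem_reverse] at hr
    exact (List.nodup_append'.mp hnodup).2.2 h1 h2
  rcases hend with rfl | rfl
  · exact isPathGraph_of_end hadj p hp hall
  · exact isPathGraph_of_end hadj p.reverse hp.reverse
      (fun x => by rw [Walk.support_reverse, List.mem_reverse]; exact hall x)

end PMT

/-- removing a leaf whose unique neighbor has degree exactly 2 does not
increase `c₁`, and hence does not increase `c(T)`. -/
theorem remove_leaf_deg2 {V : Type} [Fintype V] (G : SimpleGraph V)
    (hT : G.IsTree) (h3 : 3 ≤ Fintype.card V)
    (v w : V) (hleaf : PMT.deg G v = 1) (hadj : G.Adj v w)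
    (hw : PMT.deg G w = 2) :
    PMT.c1 (G.induce {x : V | x ≠ v}) ≤ PMT.c1 G ∧
      PMT.cT (G.induce {x : V | x ≠ v}) ≤ PMT.cT G := by
  have hww : w ∈ {x : V | x ≠ v} := hadj.ne'
  have hbdd : BddAbove {n | ∃ (a b : V) (p : G.Walk a b),
      PMT.IsCorridor G p ∧ p.length = n} := by
    refine ⟨Fintype.card V, ?_⟩
    rintro n ⟨a, b, p, hp, rfl⟩
    exact hp.1.length_lt.le
  have hc1 : PMT.c1 (G.induce {x : V | x ≠ v}) ≤ PMT.c1 G := by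
    apply csSup_le'
    rintro n ⟨a, b, q, hq, rfl⟩
    obtain ⟨a', b', p, hp, hlen, -, -⟩ := PMT.corridor_transfer hleaf hadj hw q hq
    exact hlen.trans (le_csSup hbdd ⟨a', b', p, hp, rfl⟩)
  have hc2 : PMT.c2 (G.induce {x : V | x ≠ v}) ≤ PMT.c2 G := by
    apply csSup_le'
    rintro n ⟨a, b, q, hq, h2a, h2b, rfl⟩
    obtain ⟨a', b', p, hp, hlen, hda, hdb⟩ := PMT.corridor_transfer hleaf hadj hw q hq
    refine hlen.trans (le_csSup ?_
      ⟨a', b', p, hp, lt_of_lt_of_le h2a hda, lt_of_lt_of_le h2b hdb, rfl⟩)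
    refine ⟨Fintype.card V, ?_⟩
    rintro n ⟨a, b, p, hp, -, -, rfl⟩
    exact hp.1.length_lt.le
  refine ⟨hc1, ?_⟩
  by_cases hP' : PMT.IsPathGraph (G.induce {x : V | x ≠ v})
  · rw [PMT.cT, if_pos hP', PMT.cT]
    split
    · exact hc1
    · exact hc1.trans ((Nat.le_succ _).trans (le_max_left _ _))
  · have hP : ¬ PMT.IsPathGraph G := fun h => hP' (PMT.isPathGraph_induce hleaf hadj h)
    rw [PMT.cT, if_neg hP', PMT.cT, if_neg hP]
    exact max_le_max (by omega) (by omega)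
end
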